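/- arXiv:1905.08832 — 9 statements merged into one kernel-verified Lean document; each statement's English description precedes it below -/
import Mathlib

section
/- If E ⊆ ℝ × ℝ is separately convex, then its diagonalized-symmetrized version Ê = {(α,β) ∈ E : (α,α), (β,α), (β,β) ∈ E} is also separately convex. -/
open Set

/-- Separate convexity (with vectorial components) of a subset of a product space. -/
def SepConvex {α : Type*} [AddCommGroup α] [Module ℝ α] (E : Set (α × α)) : Prop :=
  ∀ p ∈ E, ∀ q ∈ E, ∀ t : ℝ, t ∈ Set.Icc (0:ℝ) 1 → (p.1 = q.1 ∨ p.2 = q.2) →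
    t • p + (1 - t) • q ∈ E

/-- The separately convex hull: smallest separately convex superset. -/
def sepConvexHull {α : Type*} [AddCommGroup α] [Module ℝ α] (E : Set (α × α)) : Set (α × α) :=
  ⋂₀ {F : Set (α × α) | E ⊆ F ∧ SepConvex F}

/-- Diagonalized and symmetrized version Ê of a set E. -/
def hatSet {α : Type*} (E : Set (α × α)) : Set (α × α) :=
  {p ∈ E | (p.1, p.1) ∈ E ∧ (p.2, p.1) ∈ E ∧ (p.2, p.2) ∈ E}

/-- `P` is a maximal Cartesian subset of `E`. -/
def IsMaxCart {α : Type*} (E P : Set (α × α)) : Prop :=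
  ∃ A : Set α, P = A ×ˢ A ∧ P ⊆ E ∧ ∀ B : Set α, A ⊆ B → B ×ˢ B ⊆ E → B = A

lemma aux_between (a b c t : ℝ) (ht : t ∈ Set.Icc (0:ℝ) 1) :
    ∃ s ∈ Set.Icc (0:ℝ) 1,
      t*b+(1-t)*c = s*a + (1-s)*b ∨ t*b+(1-t)*c = s*a + (1-s)*c := by
  have hx : t*b+(1-t)*c ∈ segment ℝ b c :=
    ⟨t, 1-t, ht.1, by linarith [ht.2], by ring, by simp [smul_eq_mul]⟩
  rw [segment_eq_uIcc] at hx
  have hsub : Set.uIcc b c ⊆ Set.uIcc b a ∪ Set.uIcc a c :=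
    Set.uIcc_subset_uIcc_union_uIcc
  rcases hsub hx with h | h
  · rw [Set.uIcc_comm, ← segment_eq_uIcc] at h
    obtain ⟨u, v, hu, hv, huv, heq⟩ := h
    have hv1 : v = 1 - u := by linarith
    subst hv1
    exact ⟨u, ⟨hu, by linarith⟩, Or.inl (by simp [smul_eq_mul] at heq; linarith)⟩
  · rw [← segment_eq_uIcc] at h
    obtain ⟨u, v, hu, hv, huv, heq⟩ := h
    have hv1 : v = 1 - u := by linarith
    subst hv1
    exact ⟨u, ⟨hu, by linarith⟩, Or.inr (by simp [smul_eq_mul] at heq; linarith)⟩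

theorem sepConvex_hatSet (E : Set (ℝ × ℝ)) (hE : SepConvex E) :
    SepConvex (hatSet E) := by
  have key : ∀ a b c d : ℝ, (a,b) ∈ E → (c,d) ∈ E → (a = c ∨ b = d) →
      ∀ s : ℝ, s ∈ Set.Icc (0:ℝ) 1 → (s*a+(1-s)*c, s*b+(1-s)*d) ∈ E := by
    intro a b c d h1 h2 hcd s hs
    have := hE (a,b) h1 (c,d) h2 s hs hcd
    simpa [Prod.ext_iff, smul_eq_mul] using this
  rintro ⟨x1, x2⟩ ⟨hpE, hp11, hp21, hp22⟩ ⟨y1, y2⟩ ⟨hqE, hq11, hq21, hq22⟩ t ht hcoord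
  simp only at hp11 hp21 hp22 hq11 hq21 hq22 hcoord
  rcases hcoord with h | h
  · -- x1 = y1 =: α
    subst h
    set β := t*x2 + (1-t)*y2 with hβ
    have hpair : t • ((x1,x2):ℝ×ℝ) + (1-t) • (x1,y2) = (x1, β) := by
      simp [Prod.ext_iff, smul_eq_mul, hβ]; ring
    rw [hpair]
    have h1 : (x1, β) ∈ E := by
      have := key x1 x2 x1 y2 hpE hqE (Or.inl rfl) t ht
      simpa [show t*x1+(1-t)*x1 = x1 by ring] using this
    have h3 : (β, x1) ∈ E := by
      have := key x2 x1 y2 x1 hp21 hq21 (Or.inr rfl) t ht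
      simpa [show t*x1+(1-t)*x1 = x1 by ring] using this
    have h4 : (β, β) ∈ E := by
      obtain ⟨s, hs, hc | hc⟩ := aux_between x1 x2 y2 t ht
      · have hA : (x2, β) ∈ E := by
          have := key x2 x1 x2 x2 hp21 hp22 (Or.inl rfl) s hs
          simpa [show s*x2+(1-s)*x2 = x2 by ring, hβ, ← hc] using this
        have := key x1 β x2 β h1 hA (Or.inr rfl) s hs
        rw [show s*β+(1-s)*β = β by ring] at this; simpa [hβ, ← hc] using this
      · have hA : (y2, β) ∈ E := by
          have := key y2 x1 y2 y2 hq21 hq22 (Or.inl rfl) s hs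
          simpa [show s*y2+(1-s)*y2 = y2 by ring, hβ, ← hc] using this
        have := key x1 β y2 β h1 hA (Or.inr rfl) s hs
        rw [show s*β+(1-s)*β = β by ring] at this; simpa [hβ, ← hc] using this
    exact ⟨h1, hp11, h3, h4⟩
  · -- x2 = y2 =: β
    subst h
    set α := t*x1 + (1-t)*y1 with hα
    have hpair : t • ((x1,x2):ℝ×ℝ) + (1-t) • (y1,x2) = (α, x2) := by
      simp [Prod.ext_iff, smul_eq_mul, hα]; ring
    rw [hpair]
    have h1 : (α, x2) ∈ E := by
      have := key x1 x2 y1 x2 hpE hqE (Or.inr rfl) t ht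
      simpa [show t*x2+(1-t)*x2 = x2 by ring] using this
    have h3 : (x2, α) ∈ E := by
      have := key x2 x1 x2 y1 hp21 hq21 (Or.inl rfl) t ht
      simpa [show t*x2+(1-t)*x2 = x2 by ring] using this
    have h2 : (α, α) ∈ E := by
      obtain ⟨s, hs, hc | hc⟩ := aux_between x2 x1 y1 t ht
      · have hA : (α, x1) ∈ E := by
          have := key x2 x1 x1 x1 hp21 hp11 (Or.inr rfl) s hs
          simpa [show s*x1+(1-s)*x1 = x1 by ring, hα, ← hc] using this
        have := key α x2 α x1 h1 hA (Or.inl rfl) s hs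
        rw [show s*α+(1-s)*α = α by ring] at this; simpa [hα, ← hc] using this
      · have hA : (α, y1) ∈ E := by
          have := key x2 y1 y1 y1 hq21 hq11 (Or.inr rfl) s hs
          simpa [show s*y1+(1-s)*y1 = y1 by ring, hα, ← hc] using this
        have := key α x2 α y1 h1 hA (Or.inl rfl) s hs
        rw [show s*α+(1-s)*α = α by ring] at this; simpa [hα, ← hc] using this
    exact ⟨h1, h2, h3, hp22⟩
end

section
/- Let E ⊆ ℝ × ℝ be symmetric (i.e. (α,β) ∈ E implies (β,α) ∈ E) and diagonal (i.e. (α,β) ∈ E implies (α,α) ∈ E and (β,β) ∈ E). Then the separately convex hull of E equals the union over all (α,β) ∈ E of the squares Q_{α,β} = [α,β] × [α,β], where [α,β] denotes the closed segment {tα + (1−t)β : t ∈ [0,1]}. -/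
open Set

/-
The union `U` of the squares `Q_{α,β}` over `(α,β) ∈ E` contains `E`, and it is separately convex
for any `E ⊆ ℝ × ℝ`: a horizontal or vertical segment between points of two squares `Q_a`, `Q_b` lies
over a common coordinate of the two squares, so it runs inside the union of two intervals that
meet, which is again an interval. Conversely, a separately convex set containing `(α,β)`, `(β,α)`,
`(α,α)`, `(β,β)` contains the two horizontal edges of `Q_{α,β}` and hence, vertically, all of it.
-/

section SepConvex

variable {V : Type*} [AddCommGroup V] [Module ℝ V] {F : Set (V × V)}

theorem SepConvex.mk_mem_of_mem_segment_left (hF : SepConvex F) {a b x y : V}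
    (ha : (a, y) ∈ F) (hb : (b, y) ∈ F) (hx : x ∈ segment ℝ a b) : (x, y) ∈ F := by
  obtain ⟨s, r, hs, hr, hsr, rfl⟩ := hx
  obtain rfl : r = 1 - s := by linarith
  convert hF _ ha _ hb s ⟨hs, by linarith⟩ (Or.inr rfl) using 1
  simp [← add_smul]

theorem SepConvex.mk_mem_of_mem_segment_right (hF : SepConvex F) {a b x y : V}
    (ha : (x, a) ∈ F) (hb : (x, b) ∈ F) (hy : y ∈ segment ℝ a b) : (x, y) ∈ F := by
  obtain ⟨s, r, hs, hr, hsr, rfl⟩ := hy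
  obtain rfl : r = 1 - s := by linarith
  convert hF _ ha _ hb s ⟨hs, by linarith⟩ (Or.inl rfl) using 1
  simp [← add_smul]

theorem SepConvex.segment_prod_segment_subset (hF : SepConvex F) {a b : V}
    (haa : (a, a) ∈ F) (hab : (a, b) ∈ F) (hba : (b, a) ∈ F) (hbb : (b, b) ∈ F) :
    segment ℝ a b ×ˢ segment ℝ a b ⊆ F := by
  rintro ⟨x, y⟩ ⟨hx, hy⟩
  have hxa : (x, a) ∈ F := hF.mk_mem_of_mem_segment_left haa hba hx
  have hxb : (x, b) ∈ F := hF.mk_mem_of_mem_segment_left hab hbb hx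
  exact hF.mk_mem_of_mem_segment_right hxa hxb hy

end SepConvex

theorem segment_subset_union_of_mem_inter {a b c d x u v : ℝ}
    (hx : x ∈ segment ℝ a b ∩ segment ℝ c d) (hu : u ∈ segment ℝ a b) (hv : v ∈ segment ℝ c d) :
    segment ℝ u v ⊆ segment ℝ a b ∪ segment ℝ c d := by
  have hconn : IsPreconnected (segment ℝ a b ∪ segment ℝ c d) :=
    (convex_segment a b).isPreconnected.union' ⟨x, hx⟩ (convex_segment c d).isPreconnected
  rw [segment_eq_uIcc]
  exact hconn.ordConnected.uIcc_subset (Or.inl hu) (Or.inr hv)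

theorem sepConvex_biUnion_segment_prod_segment (S : Set (ℝ × ℝ)) :
    SepConvex (⋃ p ∈ S, segment ℝ p.1 p.2 ×ˢ segment ℝ p.1 p.2) := by
  rintro p hp q hq t ⟨ht0, ht1⟩ hpq
  simp only [mem_iUnion, mem_prod, exists_prop] at hp hq ⊢
  obtain ⟨a, ha, hp1, hp2⟩ := hp
  obtain ⟨b, hb, hq1, hq2⟩ := hq
  have hcombo : ∀ u v : ℝ, t * u + (1 - t) * v ∈ segment ℝ u v := fun u v =>
    ⟨t, 1 - t, ht0, by linarith, by ring, rfl⟩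
  rcases hpq with h | h
  · have hr1 : (t • p + (1 - t) • q).1 = p.1 := by
      simp only [Prod.fst_add, Prod.smul_fst, smul_eq_mul, h]; ring
    rcases segment_subset_union_of_mem_inter ⟨hp1, h ▸ hq1⟩ hp2 hq2 (hcombo p.2 q.2) with h2 | h2
    · exact ⟨a, ha, hr1 ▸ hp1, h2⟩
    · exact ⟨b, hb, hr1 ▸ h ▸ hq1, h2⟩
  · have hr2 : (t • p + (1 - t) • q).2 = p.2 := by
      simp only [Prod.snd_add, Prod.smul_snd, smul_eq_mul, h]; ring
    rcases segment_subset_union_of_mem_inter ⟨hp2, h ▸ hq2⟩ hp1 hq1 (hcombo p.1 q.1) with h1 | h1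
    · exact ⟨a, ha, h1, hr2 ▸ hp2⟩
    · exact ⟨b, hb, h1, hr2 ▸ h ▸ hq2⟩

theorem sepConvexHull_eq_union_squares (E : Set (ℝ × ℝ))
    (hsym : ∀ p ∈ E, (p.2, p.1) ∈ E)
    (hdiag : ∀ p ∈ E, (p.1, p.1) ∈ E ∧ (p.2, p.2) ∈ E) :
    sepConvexHull E = ⋃ p ∈ E, segment ℝ p.1 p.2 ×ˢ segment ℝ p.1 p.2 := by
  apply subset_antisymm
  · refine sInter_subset_of_mem ⟨fun p hp => ?_, sepConvex_biUnion_segment_prod_segment E⟩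
    exact mem_biUnion hp ⟨left_mem_segment ℝ p.1 p.2, right_mem_segment ℝ p.1 p.2⟩
  · rintro x hx F ⟨hEF, hF⟩
    obtain ⟨p, hp, hxp⟩ := mem_iUnion₂.mp hx
    exact hF.segment_prod_segment_subset (hEF (hdiag p hp).1) (hEF hp) (hEF (hsym p hp))
      (hEF (hdiag p hp).2) hxp
end

section
/- Let E ⊆ ℝ × ℝ be symmetric and diagonal. Then every element of the separately convex hull E^sc can be written as a convex combination t s (α,α) + t(1−s)(α,β) + (1−t)s(β,α) + (1−t)(1−s)(β,β) with (α,β) ∈ E and t, s ∈ [0,1]; in particular, E^sc = E^sc_2, where E^sc_i is the i-th stage of the iterative construction of the separately convex hull. -/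
open Set

/-- The i-th stage of the iterative construction of the separately convex hull. -/
def scStage (E : Set (ℝ × ℝ)) : ℕ → Set (ℝ × ℝ)
  | 0 => E
  | i + 1 => {p | ∃ q ∈ scStage E i, ∃ r ∈ scStage E i, (q.1 = r.1 ∨ q.2 = r.2) ∧
      ∃ t ∈ Set.Icc (0:ℝ) 1, p = t • q + (1 - t) • r}

/-- Auxiliary: union of squares over pairs in `E`. -/
def sqUnion (E : Set (ℝ × ℝ)) : Set (ℝ × ℝ) :=
  ⋃ q ∈ E, (uIcc q.1 q.2) ×ˢ (uIcc q.1 q.2)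

lemma mem_sqUnion {E : Set (ℝ × ℝ)} {p : ℝ × ℝ} :
    p ∈ sqUnion E ↔ ∃ q ∈ E, p.1 ∈ uIcc q.1 q.2 ∧ p.2 ∈ uIcc q.1 q.2 := by
  simp only [sqUnion, Set.mem_iUnion, Set.mem_prod, exists_prop]

lemma mem_uIcc_minmax {a b x : ℝ} : x ∈ uIcc a b ↔ min a b ≤ x ∧ x ≤ max a b := by
  rw [Set.uIcc, Set.mem_Icc]

lemma combo_mem_uIcc {a b t : ℝ} (ht : t ∈ Set.Icc (0:ℝ) 1) :
    t * a + (1 - t) * b ∈ uIcc a b := by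
  rw [← segment_eq_uIcc]
  exact ⟨t, 1 - t, ht.1, by linarith [ht.2], by ring, by simp [smul_eq_mul]⟩

lemma uIcc_exists_combo {a b x : ℝ} (hx : x ∈ uIcc a b) :
    ∃ t ∈ Set.Icc (0:ℝ) 1, x = t * a + (1 - t) * b := by
  rw [← segment_eq_uIcc] at hx
  obtain ⟨u, v, hu, hv, huv, h⟩ := hx
  refine ⟨u, ⟨hu, by linarith⟩, ?_⟩
  have hv' : v = 1 - u := by linarith
  subst hv'
  simpa [smul_eq_mul] using h.symm

lemma key_interval {A B C D y1 y2 y x : ℝ} (hx1 : A ≤ x) (hx1' : x ≤ B)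
    (hy1 : A ≤ y1) (hy1' : y1 ≤ B) (hx2 : C ≤ x) (hx2' : x ≤ D)
    (hy2 : C ≤ y2) (hy2' : y2 ≤ D) (h : min y1 y2 ≤ y) (h' : y ≤ max y1 y2) :
    (A ≤ y ∧ y ≤ B) ∨ (C ≤ y ∧ y ≤ D) := by
  rcases min_le_iff.1 h with h1 | h1 <;> rcases le_max_iff.1 h' with h2 | h2 <;>
    rcases le_total y A with h3 | h3 <;> rcases le_total y B with h4 | h4 <;>
      first
        | (left; constructor <;> linarith)
        | (right; constructor <;> linarith)

lemma sepConvex_sqUnion (E : Set (ℝ × ℝ)) : SepConvex (sqUnion E) := by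
  intro p hp q hq t ht hc
  rw [mem_sqUnion] at hp hq ⊢
  obtain ⟨u, huE, hp1, hp2⟩ := hp
  obtain ⟨v, hvE, hq1, hq2⟩ := hq
  have hm1 : (t • p + (1 - t) • q).1 = t * p.1 + (1 - t) * q.1 := rfl
  have hm2 : (t • p + (1 - t) • q).2 = t * p.2 + (1 - t) * q.2 := rfl
  rw [mem_uIcc_minmax] at hp1 hp2 hq1 hq2
  rcases hc with h | h
  · -- shared first coordinate
    have hx : t * p.1 + (1 - t) * q.1 = p.1 := by rw [← h]; ring
    have hy := mem_uIcc_minmax.1 (combo_mem_uIcc (a := p.2) (b := q.2) ht)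
    have hq1' : min v.1 v.2 ≤ p.1 ∧ p.1 ≤ max v.1 v.2 := by rw [h]; exact hq1
    rcases key_interval hp1.1 hp1.2 hp2.1 hp2.2 hq1'.1 hq1'.2 hq2.1 hq2.2 hy.1 hy.2
      with hk | hk
    · exact ⟨u, huE, by rw [hm1, hx, mem_uIcc_minmax]; exact hp1,
        by rw [hm2, mem_uIcc_minmax]; exact hk⟩
    · exact ⟨v, hvE, by rw [hm1, hx, mem_uIcc_minmax]; exact hq1',
        by rw [hm2, mem_uIcc_minmax]; exact hk⟩
  · -- shared second coordinate
    have hx : t * p.2 + (1 - t) * q.2 = p.2 := by rw [← h]; ring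
    have hy := mem_uIcc_minmax.1 (combo_mem_uIcc (a := p.1) (b := q.1) ht)
    have hq2' : min v.1 v.2 ≤ p.2 ∧ p.2 ≤ max v.1 v.2 := by rw [h]; exact hq2
    rcases key_interval hp2.1 hp2.2 hp1.1 hp1.2 hq2'.1 hq2'.2 hq1.1 hq1.2 hy.1 hy.2
      with hk | hk
    · exact ⟨u, huE, by rw [hm1, mem_uIcc_minmax]; exact hk,
        by rw [hm2, hx, mem_uIcc_minmax]; exact hp2⟩
    · exact ⟨v, hvE, by rw [hm1, mem_uIcc_minmax]; exact hk,
        by rw [hm2, hx, mem_uIcc_minmax]; exact hq2'⟩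

lemma subset_sepConvexHull {α : Type*} [AddCommGroup α] [Module ℝ α] (E : Set (α × α)) :
    E ⊆ sepConvexHull E := fun p hp => Set.mem_sInter.2 fun _ hF => hF.1 hp

lemma sepConvex_sepConvexHull {α : Type*} [AddCommGroup α] [Module ℝ α] (E : Set (α × α)) :
    SepConvex (sepConvexHull E) := by
  intro p hp q hq t ht hc
  refine Set.mem_sInter.2 fun F hF => ?_
  exact hF.2 p (Set.mem_sInter.1 hp F hF) q (Set.mem_sInter.1 hq F hF) t ht hc

lemma sepConvexHull_min {α : Type*} [AddCommGroup α] [Module ℝ α] {E F : Set (α × α)}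
    (h1 : E ⊆ F) (h2 : SepConvex F) : sepConvexHull E ⊆ F :=
  Set.sInter_subset_of_mem ⟨h1, h2⟩

lemma scStage_subset_hull (E : Set (ℝ × ℝ)) : ∀ i, scStage E i ⊆ sepConvexHull E := by
  intro i
  induction i with
  | zero => exact subset_sepConvexHull E
  | succ n ih =>
    rintro p ⟨q, hq, r, hr, hc, t, ht, rfl⟩
    exact sepConvex_sepConvexHull E q (ih hq) r (ih hr) t ht hc

theorem sepConvexHull_convexCombination (E : Set (ℝ × ℝ))
    (hsym : ∀ p ∈ E, (p.2, p.1) ∈ E)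
    (hdiag : ∀ p ∈ E, (p.1, p.1) ∈ E ∧ (p.2, p.2) ∈ E) :
    (∀ p ∈ sepConvexHull E, ∃ α β : ℝ, (α, β) ∈ E ∧
      ∃ t ∈ Set.Icc (0:ℝ) 1, ∃ s ∈ Set.Icc (0:ℝ) 1,
        p = (t * s) • ((α, α) : ℝ × ℝ) + (t * (1 - s)) • ((α, β) : ℝ × ℝ)
            + ((1 - t) * s) • ((β, α) : ℝ × ℝ) + ((1 - t) * (1 - s)) • ((β, β) : ℝ × ℝ)) ∧
    sepConvexHull E = scStage E 2 := by
  have hEF : E ⊆ sqUnion E := by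
    intro p hp
    exact mem_sqUnion.2 ⟨p, hp, left_mem_uIcc, right_mem_uIcc⟩
  have hhull : sepConvexHull E ⊆ sqUnion E := sepConvexHull_min hEF (sepConvex_sqUnion E)
  -- sqUnion E ⊆ scStage E 2
  have hF2 : sqUnion E ⊆ scStage E 2 := by
    intro p hp
    obtain ⟨⟨a, b⟩, hab, h1, h2⟩ := mem_sqUnion.1 hp
    obtain ⟨t, ht, hxt⟩ := uIcc_exists_combo h1
    obtain ⟨s, hs, hys⟩ := uIcc_exists_combo h2
    have haa : ((a, a) : ℝ × ℝ) ∈ E := (hdiag _ hab).1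
    have hbb : ((b, b) : ℝ × ℝ) ∈ E := (hdiag _ hab).2
    have hba : ((b, a) : ℝ × ℝ) ∈ E := hsym _ hab
    have hq : ((p.1, a) : ℝ × ℝ) ∈ scStage E 1 := by
      refine ⟨(a, a), haa, (b, a), hba, Or.inr rfl, t, ht, ?_⟩
      simp only [Prod.ext_iff, Prod.fst_add, Prod.snd_add, Prod.smul_fst, Prod.smul_snd,
        smul_eq_mul]
      constructor
      · rw [hxt]
      · ring
    have hr : ((p.1, b) : ℝ × ℝ) ∈ scStage E 1 := by
      refine ⟨(a, b), hab, (b, b), hbb, Or.inr rfl, t, ht, ?_⟩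
      simp only [Prod.ext_iff, Prod.fst_add, Prod.snd_add, Prod.smul_fst, Prod.smul_snd,
        smul_eq_mul]
      constructor
      · rw [hxt]
      · ring
    refine ⟨(p.1, a), hq, (p.1, b), hr, Or.inl rfl, s, hs, ?_⟩
    simp only [Prod.ext_iff, Prod.fst_add, Prod.snd_add, Prod.smul_fst, Prod.smul_snd,
      smul_eq_mul]
    constructor
    · ring
    · rw [hys]
  constructor
  · intro p hp
    obtain ⟨⟨a, b⟩, hab, h1, h2⟩ := mem_sqUnion.1 (hhull hp)
    obtain ⟨t, ht, hxt⟩ := uIcc_exists_combo h1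
    obtain ⟨s, hs, hys⟩ := uIcc_exists_combo h2
    refine ⟨a, b, hab, t, ht, s, hs, ?_⟩
    simp only [Prod.ext_iff, Prod.fst_add, Prod.snd_add, Prod.smul_fst, Prod.smul_snd,
      smul_eq_mul]
    constructor
    · rw [hxt]; ring
    · rw [hys]; ring
  · exact le_antisymm (fun p hp => hF2 (hhull hp)) (scStage_subset_hull E 2)
end

section
/- Let W : ℝ^m × ℝ^m → ℝ ∪ {∞} be lower semicontinuous and bounded from below. Then W is separately convex (i.e. W(·,ξ) and W(ξ,·) are convex for every ξ ∈ ℝ^m) if and only if for all Borel probability measures ν, μ on ℝ^m with finite first moments one has ∫∫ W(ξ,ζ) dν(ξ) dμ(ζ) ≥ W([ν],[μ]), where [ν] = ∫ ξ dν(ξ) denotes the barycenter. -/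
open Set

open MeasureTheory ENNReal

/-- The nonnegative part of an extended real number, as an element of ℝ≥0∞. -/
noncomputable def posPart (x : EReal) : ℝ≥0∞ :=
  if x = ⊤ then ⊤ else ENNReal.ofReal x.toReal

/-- Integral of an extended-real-valued function (defined via positive and negative parts). -/
noncomputable def elint {α : Type*} [MeasurableSpace α] (μ : Measure α) (f : α → EReal) : EReal :=
  ((∫⁻ x, posPart (f x) ∂μ : ℝ≥0∞) : EReal) - ((∫⁻ x, posPart (-(f x)) ∂μ : ℝ≥0∞) : EReal)

/-- Separate convexity (with vectorial components) of an extended-real-valued function: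
W(·,ξ) and W(ξ,·) are convex for every ξ. -/
def SepConvexFnE {m : ℕ} (W : (Fin m → ℝ) × (Fin m → ℝ) → EReal) : Prop :=
  ∀ ξ : Fin m → ℝ,
    (∀ a b : Fin m → ℝ, ∀ t ∈ Set.Ioo (0:ℝ) 1,
      W (t • a + (1 - t) • b, ξ) ≤ (t : EReal) * W (a, ξ) + (((1 - t : ℝ)) : EReal) * W (b, ξ)) ∧
    (∀ a b : Fin m → ℝ, ∀ t ∈ Set.Ioo (0:ℝ) 1,
      W (ξ, t • a + (1 - t) • b) ≤ (t : EReal) * W (ξ, a) + (((1 - t : ℝ)) : EReal) * W (ξ, b))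

namespace SepAux

lemma pp_coe (r : ℝ) : _root_.posPart (r : EReal) = ENNReal.ofReal r := by
  unfold _root_.posPart
  rw [if_neg (by simp)]
  simp

@[simp] lemma pp_top : _root_.posPart (⊤ : EReal) = ⊤ := by
  unfold _root_.posPart; simp

@[simp] lemma pp_bot : _root_.posPart (⊥ : EReal) = 0 := by
  unfold _root_.posPart
  rw [if_neg (by simp)]
  simp

lemma pp_eq_top_iff {x : EReal} : _root_.posPart x = ⊤ ↔ x = ⊤ := by
  unfold _root_.posPart
  split <;> simp_all [ENNReal.ofReal_ne_top]

lemma pp_mono : Monotone (_root_.posPart) := by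
  intro x y h
  induction y with
  | bot => rw [le_bot_iff.1 h]
  | top => simp
  | coe y =>
    induction x with
    | bot => simp
    | top => simp at h
    | coe x =>
      rw [pp_coe, pp_coe]
      exact ENNReal.ofReal_le_ofReal (EReal.coe_le_coe_iff.1 h)

lemma ereal_recover {C : ℝ} {x : EReal} (h : (C : EReal) ≤ x) :
    x = ((_root_.posPart (x - (C : EReal)) : ℝ≥0∞) : EReal) + (C : EReal) := by
  induction x with
  | bot => exact absurd h (EReal.bot_lt_coe C).not_ge
  | top => rw [EReal.top_sub_coe, pp_top, EReal.coe_ennreal_top, EReal.top_add_coe]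
  | coe x =>
    rw [← EReal.coe_sub, pp_coe, EReal.coe_ennreal_ofReal,
      max_eq_left (by linarith [EReal.coe_le_coe_iff.1 h]), ← EReal.coe_add]
    norm_num

lemma measurable_pp : Measurable (_root_.posPart) := by
  apply EReal.measurable_of_measurable_real
  simp only [pp_coe]
  exact ENNReal.measurable_ofReal

lemma measurable_ppSub (C : ℝ) : Measurable fun x : EReal => _root_.posPart (x - (C : EReal)) := by
  apply EReal.measurable_of_measurable_real
  simp only [← EReal.coe_sub, pp_coe]
  exact ENNReal.measurable_ofReal.comp (measurable_id.sub measurable_const)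

end SepAux

namespace SepAux

lemma pp_neg_le {C : ℝ} {x : EReal} (h : (C : EReal) ≤ x) :
    _root_.posPart (-x) ≤ ENNReal.ofReal (-C) := by
  induction x with
  | bot => exact absurd h (EReal.bot_lt_coe C).not_ge
  | top => simp
  | coe x =>
    rw [← EReal.coe_neg, pp_coe]
    exact ENNReal.ofReal_le_ofReal (by linarith [EReal.coe_le_coe_iff.1 h])

lemma pp_sub_eq {C : ℝ} (hC : C ≤ 0) {x : EReal} (h : (C : EReal) ≤ x) :
    _root_.posPart (x - (C : EReal)) = _root_.posPart x + (ENNReal.ofReal (-C) - _root_.posPart (-x)) := by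
  induction x with
  | bot => exact absurd h (EReal.bot_lt_coe C).not_ge
  | top =>
    rw [EReal.top_sub_coe, pp_top]
    simp
  | coe x =>
    have hx : C ≤ x := EReal.coe_le_coe_iff.1 h
    rw [← EReal.coe_sub, ← EReal.coe_neg, pp_coe, pp_coe, pp_coe]
    rcases le_total 0 x with hx0 | hx0
    · rw [show ENNReal.ofReal (-x) = 0 from ENNReal.ofReal_eq_zero.2 (by linarith), tsub_zero,
        ← ENNReal.ofReal_add hx0 (by linarith)]
      ring_nf
    · rw [show ENNReal.ofReal x = 0 from ENNReal.ofReal_eq_zero.2 hx0, zero_add,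
        ← ENNReal.ofReal_sub _ (by linarith)]
      ring_nf

lemma coe_ennreal_fin {N : ℝ≥0∞} (h : N ≠ ⊤) : (N : EReal) = ((N.toReal : ℝ) : EReal) := by
  conv_lhs => rw [← ENNReal.ofReal_toReal h]
  rw [EReal.coe_ennreal_ofReal, max_eq_left ENNReal.toReal_nonneg]

lemma elint_eq {α : Type*} [MeasurableSpace α] (μ : Measure α) [IsProbabilityMeasure μ]
    {f : α → EReal} (hf : Measurable f) {C : ℝ} (hC : C ≤ 0) (hCf : ∀ x, (C : EReal) ≤ f x) :
    elint μ f = ((∫⁻ x, _root_.posPart (f x - (C : EReal)) ∂μ : ℝ≥0∞) : EReal) + (C : EReal) := by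
  set P := ∫⁻ x, _root_.posPart (f x) ∂μ with hPdef
  set N := ∫⁻ x, _root_.posPart (-(f x)) ∂μ with hNdef
  have hmeasN : Measurable fun x => _root_.posPart (-(f x)) :=
    measurable_pp.comp (continuous_neg.measurable.comp hf)
  have hNle : N ≤ ENNReal.ofReal (-C) := by
    calc N ≤ ∫⁻ _, ENNReal.ofReal (-C) ∂μ := lintegral_mono fun x => pp_neg_le (hCf x)
    _ = ENNReal.ofReal (-C) := by simp
  have hNtop : N ≠ ⊤ := (hNle.trans_lt ofReal_lt_top).ne
  have hmf : Measurable fun x => _root_.posPart (f x) := measurable_pp.comp hf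
  have key : ∫⁻ x, _root_.posPart (f x - (C : EReal)) ∂μ = P + (ENNReal.ofReal (-C) - N) := by
    rw [lintegral_congr fun x => pp_sub_eq hC (hCf x), lintegral_add_left hmf]
    congr 1
    rw [lintegral_sub hmeasN hNtop
      (Filter.Eventually.of_forall fun x => pp_neg_le (hCf x))]
    simp
    rfl
  rw [elint, ← hPdef, ← hNdef, key]
  rcases eq_or_ne P ⊤ with hP | hP
  · have htop : (⊤ : ℝ≥0∞) + (ENNReal.ofReal (-C) - N) = ⊤ := by simp
    rw [hP, htop, coe_ennreal_fin hNtop, EReal.coe_ennreal_top, EReal.top_sub_coe,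
      EReal.top_add_coe]
  · have h1 : P + (ENNReal.ofReal (-C) - N) ≠ ⊤ := by
      apply ENNReal.add_ne_top.2 ⟨hP, _⟩
      exact ((tsub_le_self.trans_lt ofReal_lt_top)).ne
    rw [coe_ennreal_fin hNtop, coe_ennreal_fin hP, coe_ennreal_fin h1, ← EReal.coe_sub,
      ← EReal.coe_add, EReal.coe_eq_coe_iff]
    rw [ENNReal.toReal_add hP (((tsub_le_self.trans_lt ofReal_lt_top)).ne),
      ENNReal.toReal_sub_of_le hNle ofReal_ne_top, ENNReal.toReal_ofReal (by linarith)]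
    ring

lemma int_le_pp {α : Type*} [MeasurableSpace α] (μ : Measure α) [IsProbabilityMeasure μ]
    {f : α → EReal} {g : α → ℝ} (hg : Integrable g μ) {C : ℝ} (hC : C ≤ 0)
    (hCf : ∀ x, (C : EReal) ≤ f x) (hgf : ∀ᵐ x ∂μ, (g x : EReal) ≤ f x) :
    ((∫ x, g x ∂μ : ℝ) : EReal) ≤
      ((∫⁻ x, _root_.posPart (f x - (C : EReal)) ∂μ : ℝ≥0∞) : EReal) + (C : EReal) := by
  set g' := fun x => max (g x) C with hg'def
  have hg'i : Integrable g' μ := hg.sup (integrable_const C)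
  have h1 : ∫ x, g x ∂μ ≤ ∫ x, g' x ∂μ :=
    integral_mono hg hg'i fun x => le_max_left _ _
  have hae : ∀ᵐ x ∂μ, ENNReal.ofReal (g' x - C) ≤ _root_.posPart (f x - (C : EReal)) := by
    filter_upwards [hgf] with x hx
    have h2 : ((g' x : ℝ) : EReal) ≤ f x := by
      rcases le_total (g x) C with h | h
      · rw [hg'def]
        simp only [sup_eq_right.2 h]
        exact hCf x
      · rw [hg'def]
        simp only [sup_eq_left.2 h]
        exact hx
    calc ENNReal.ofReal (g' x - C) = _root_.posPart (((g' x - C : ℝ)) : EReal) := (pp_coe _).symm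
    _ ≤ _root_.posPart (f x - (C : EReal)) := by
        apply pp_mono
        rw [EReal.coe_sub]
        exact EReal.sub_le_sub h2 le_rfl
  have hsub : Integrable (fun x => g' x - C) μ := hg'i.sub (integrable_const C)
  have h3 : ENNReal.ofReal (∫ x, (g' x - C) ∂μ) ≤ ∫⁻ x, _root_.posPart (f x - (C : EReal)) ∂μ := by
    rw [ofReal_integral_eq_lintegral_ofReal hsub
      (Filter.Eventually.of_forall fun x => by simp [hg'def, sub_nonneg, le_max_right])]
    exact lintegral_mono_ae hae
  have h4 : ∫ x, (g' x - C) ∂μ = ∫ x, g' x ∂μ - C := by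
    rw [integral_sub hg'i (integrable_const C), integral_const]
    simp
  have h5 : (0:ℝ) ≤ ∫ x, g' x ∂μ - C := by
    rw [← h4]
    exact integral_nonneg fun x => by simp [hg'def, sub_nonneg, le_max_right]
  calc ((∫ x, g x ∂μ : ℝ) : EReal) ≤ ((∫ x, g' x ∂μ : ℝ) : EReal) := EReal.coe_le_coe_iff.2 h1
  _ = (((∫ x, g' x ∂μ - C : ℝ)) : EReal) + (C : EReal) := by
      rw [← EReal.coe_add]; norm_num
  _ = ((ENNReal.ofReal (∫ x, (g' x - C) ∂μ) : ℝ≥0∞) : EReal) + (C : EReal) := by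
      rw [EReal.coe_ennreal_ofReal, h4, max_eq_left h5]
  _ ≤ ((∫⁻ x, _root_.posPart (f x - (C : EReal)) ∂μ : ℝ≥0∞) : EReal) + (C : EReal) := by
      exact add_le_add_left (EReal.coe_ennreal_le_coe_ennreal_iff.2 h3) _

end SepAux

namespace SepAux

lemma pp_sub_le {C : ℝ} {x : EReal} {Y : ℝ≥0∞} (hCx : (C : EReal) ≤ x)
    (h : x ≤ (Y : EReal) + (C : EReal)) : _root_.posPart (x - (C : EReal)) ≤ Y := by
  rcases eq_or_ne Y ⊤ with hY | hY
  · simp [hY]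
  · rw [coe_ennreal_fin hY, ← EReal.coe_add] at h
    induction x with
    | bot => exact absurd hCx (EReal.bot_lt_coe C).not_ge
    | top => exact absurd h (EReal.coe_lt_top _).not_ge
    | coe x =>
      rw [← EReal.coe_sub, pp_coe]
      calc ENNReal.ofReal (x - C) ≤ ENNReal.ofReal Y.toReal :=
        ENNReal.ofReal_le_ofReal (by linarith [EReal.coe_le_coe_iff.1 h])
      _ = Y := ENNReal.ofReal_toReal hY

lemma jensen {m : ℕ} {f : (Fin m → ℝ) → EReal} (hlsc : LowerSemicontinuous f)
    {C : ℝ} (hC : C ≤ 0) (hCf : ∀ x, (C : EReal) ≤ f x)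
    (hconv : ∀ a b : Fin m → ℝ, ∀ t ∈ Set.Ioo (0:ℝ) 1,
      f (t • a + (1 - t) • b) ≤ (t : EReal) * f a + (((1 - t : ℝ)) : EReal) * f b)
    (μ : Measure (Fin m → ℝ)) [IsProbabilityMeasure μ] (hint : Integrable id μ) :
    f (∫ x, x ∂μ) ≤ ((∫⁻ x, _root_.posPart (f x - (C : EReal)) ∂μ : ℝ≥0∞) : EReal) + (C : EReal) := by
  classical
  set b := ∫ x, x ∂μ with hbdef
  set L := ∫⁻ x, _root_.posPart (f x - (C : EReal)) ∂μ with hLdef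
  set I : EReal := (L : EReal) + (C : EReal) with hIdef
  by_contra hcon
  push_neg at hcon
  have hfne_bot : ∀ x, f x ≠ ⊥ := fun x =>
    ((EReal.bot_lt_coe C).trans_le (hCf x)).ne'
  have hLtop : L ≠ ⊤ := by
    intro h
    rw [hIdef, h, EReal.coe_ennreal_top, EReal.top_add_coe] at hcon
    exact (lt_irrefl _ (hcon.trans_le le_top))
  have hfmeas : Measurable f := hlsc.measurable
  have hae_ne_top : ∀ᵐ x ∂μ, f x ≠ ⊤ := by
    filter_upwards [ae_lt_top ((measurable_ppSub C).comp hfmeas) hLtop] with x hx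
    intro hfx
    rw [Function.comp_apply, hfx, EReal.top_sub_coe, pp_top] at hx
    exact (lt_irrefl _ hx)
  obtain ⟨r, hIr, hrfb⟩ := EReal.exists_between_coe_real hcon
  set S : Set ((Fin m → ℝ) × ℝ) := {p | f p.1 ≤ (p.2 : EReal)} with hSdef
  have hSclosed : IsClosed S := by
    rw [← isOpen_compl_iff, isOpen_iff_mem_nhds]
    rintro ⟨x, s⟩ hxs
    simp only [hSdef, Set.mem_compl_iff, Set.mem_setOf_eq, not_le] at hxs
    obtain ⟨y, hsy, hyf⟩ := EReal.exists_between_coe_real hxs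
    have h1 : ∀ᶠ x' in nhds x, (y : EReal) < f x' := hlsc x _ hyf
    have h2 : ∀ᶠ s' in nhds s, s' < y := by
      filter_upwards [Iio_mem_nhds (EReal.coe_lt_coe_iff.1 hsy)] with s' hs'
      exact hs'
    have h3 : ∀ᶠ p in nhds (x, s), p ∈ Sᶜ := by
      rw [nhds_prod_eq]
      filter_upwards [h1.prod_mk h2] with p hp
      simp only [hSdef, Set.mem_compl_iff, Set.mem_setOf_eq, not_le]
      exact (EReal.coe_lt_coe_iff.2 hp.2).trans hp.1
    exact h3
  have hSconv : Convex ℝ S := by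
    rintro ⟨p1, p2⟩ hp ⟨q1, q2⟩ hq a c ha hc hac
    simp only [hSdef, Set.mem_setOf_eq] at hp hq ⊢
    simp only [Prod.smul_mk, Prod.mk_add_mk, smul_eq_mul]
    rcases eq_or_lt_of_le ha with ha0 | ha0
    · have hc1 : c = 1 := by linarith
      subst hc1
      rw [← ha0]
      simpa using hq
    · rcases eq_or_lt_of_le hc with hc0 | hc0
      · have ha1 : a = 1 := by linarith
        subst ha1
        rw [← hc0]
        simpa using hp
      · have hca : c = 1 - a := by linarith
        subst hca
        calc f (a • p1 + (1 - a) • q1)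
            ≤ (a : EReal) * f p1 + (((1 - a : ℝ)) : EReal) * f q1 :=
              hconv _ _ a ⟨ha0, by linarith⟩
          _ ≤ (a : EReal) * (p2 : EReal) + (((1 - a : ℝ)) : EReal) * (q2 : EReal) := by
              apply add_le_add
              · exact mul_le_mul_of_nonneg_left hp (by exact_mod_cast ha)
              · exact mul_le_mul_of_nonneg_left hq (by exact_mod_cast (by linarith : (0:ℝ) ≤ 1 - a))
          _ = (((a * p2 + (1 - a) * q2 : ℝ)) : EReal) := by
              rw [← EReal.coe_mul, ← EReal.coe_mul, ← EReal.coe_add]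
  have hbr : (b, r) ∉ S := by
    simp only [hSdef, Set.mem_setOf_eq, not_le]
    exact hrfb
  obtain ⟨φ, u, hφS, hφbr⟩ := geometric_hahn_banach_closed_point hSconv hSclosed hbr
  set ψ : (Fin m → ℝ) →L[ℝ] ℝ := φ.comp (ContinuousLinearMap.inl ℝ (Fin m → ℝ) ℝ) with hψdef
  set lam : ℝ := φ (0, 1) with hlamdef
  have hφ : ∀ x s, φ (x, s) = ψ x + s * lam := by
    intro x s
    have h0 : (x, s) = (x, (0:ℝ)) + s • ((0 : Fin m → ℝ), (1:ℝ)) := by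
      simp [Prod.ext_iff]
    rw [h0, map_add, _root_.map_smul]
    simp [hψdef, hlamdef, smul_eq_mul]
  have hmemS : ∀ x : Fin m → ℝ, f x ≠ ⊤ → (x, (f x).toReal) ∈ S := by
    intro x hx
    simp only [hSdef, Set.mem_setOf_eq]
    rw [EReal.coe_toReal hx (hfne_bot x)]
  haveI : (MeasureTheory.ae μ).NeBot := ae_neBot.2 (IsProbabilityMeasure.ne_zero μ)
  obtain ⟨x₀, hx₀⟩ := hae_ne_top.exists
  have hψint : Integrable (fun x => ψ x) μ := by
    have := ψ.integrable_comp hint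
    simpa using this
  have hψb : ∫ x, ψ x ∂μ = ψ b := by
    have := ψ.integral_comp_comm hint
    simpa using this
  have hlam : lam ≤ 0 := by
    by_contra hlam'
    push_neg at hlam'
    set s := max (f x₀).toReal ((u - ψ x₀) / lam + 1) with hsdef
    have hmem : (x₀, s) ∈ S := by
      simp only [hSdef, Set.mem_setOf_eq]
      calc f x₀ = ((f x₀).toReal : EReal) := (EReal.coe_toReal hx₀ (hfne_bot x₀)).symm
      _ ≤ (s : EReal) := EReal.coe_le_coe_iff.2 (le_max_left _ _)
    have h5 := hφS _ hmem
    rw [hφ] at h5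
    have h6 : s < (u - ψ x₀) / lam := (lt_div_iff₀ hlam').2 (by linarith)
    have h7 : (u - ψ x₀) / lam + 1 ≤ s := le_max_right _ _
    linarith
  rcases eq_or_lt_of_le hlam with hlam0 | hlamneg
  · -- lam = 0
    have hψu : ∀ᵐ x ∂μ, ψ x ≤ u := by
      filter_upwards [hae_ne_top] with x hx
      have := hφS _ (hmemS x hx)
      rw [hφ, hlam0, mul_zero, add_zero] at this
      exact this.le
    have h8 : ψ b ≤ u := by
      rw [← hψb]
      calc ∫ x, ψ x ∂μ ≤ ∫ _, u ∂μ := integral_mono_ae hψint (integrable_const u) hψu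
      _ = u := by simp
    rw [hφ, hlam0, mul_zero, add_zero] at hφbr
    linarith
  · -- lam < 0
    set g : (Fin m → ℝ) → ℝ := fun x => (u - ψ x) / lam with hgdef
    have hgint : Integrable g μ := ((integrable_const u).sub hψint).div_const lam
    have hgf : ∀ᵐ x ∂μ, (g x : EReal) ≤ f x := by
      filter_upwards [hae_ne_top] with x hx
      have h9 := hφS _ (hmemS x hx)
      rw [hφ] at h9
      have h10 : (u - ψ x) / lam < (f x).toReal := by
        rw [div_lt_iff_of_neg hlamneg]
        linarith
      calc (g x : EReal) ≤ (((f x).toReal : ℝ) : EReal) := EReal.coe_le_coe_iff.2 h10.le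
      _ = f x := EReal.coe_toReal hx (hfne_bot x)
    have hkey : ((∫ x, g x ∂μ : ℝ) : EReal) ≤ I := int_le_pp μ hgint hC hCf hgf
    have hgb : ∫ x, g x ∂μ = (u - ψ b) / lam := by
      rw [hgdef]
      simp only [integral_div]
      rw [integral_sub (integrable_const u) hψint, integral_const, hψb]
      simp
    have h11 : r < (u - ψ b) / lam := by
      rw [hφ] at hφbr
      rw [lt_div_iff_of_neg hlamneg]
      linarith
    have h12 : (r : EReal) < I := by
      calc (r : EReal) < ((∫ x, g x ∂μ : ℝ) : EReal) := by
            rw [hgb]; exact EReal.coe_lt_coe_iff.2 h11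
      _ ≤ I := hkey
    exact (lt_irrefl _ (hIr.trans h12))

end SepAux

namespace SepAux

lemma combo_le {x y : EReal} (hx : x ≠ ⊥) (hy : y ≠ ⊥) {t : ℝ} (ht : 0 < t) (ht1 : t < 1) :
    ((ENNReal.ofReal t * _root_.posPart x + ENNReal.ofReal (1 - t) * _root_.posPart y : ℝ≥0∞) : EReal)
      - ((ENNReal.ofReal t * _root_.posPart (-x) + ENNReal.ofReal (1 - t) * _root_.posPart (-y) : ℝ≥0∞) : EReal)
      ≤ (t : EReal) * x + (((1 - t : ℝ)) : EReal) * y := by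
  have hmax : ∀ z : ℝ, max z 0 - max (-z) 0 = z := by
    intro z
    rcases le_total z 0 with h | h
    · rw [max_eq_right h, max_eq_left (by linarith)]; ring
    · rw [max_eq_left h, max_eq_right (by linarith)]; ring
  rcases eq_or_ne x ⊤ with hxt | hxt
  · have h1 : (t : EReal) * x = ⊤ := by rw [hxt]; exact EReal.coe_mul_top_of_pos ht
    have h2 : (((1 - t : ℝ)) : EReal) * y ≠ ⊥ := by
      induction y with
      | bot => exact absurd rfl hy
      | top => rw [EReal.coe_mul_top_of_pos (by linarith)]; simp
      | coe y => rw [← EReal.coe_mul]; exact EReal.coe_ne_bot _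
    rw [h1, EReal.top_add_of_ne_bot h2]
    exact le_top
  · rcases eq_or_ne y ⊤ with hyt | hyt
    · have h1 : (((1 - t : ℝ)) : EReal) * y = ⊤ := by
        rw [hyt]; exact EReal.coe_mul_top_of_pos (by linarith)
      have h2 : (t : EReal) * x ≠ ⊥ := by
        induction x with
        | bot => exact absurd rfl hx
        | top => rw [EReal.coe_mul_top_of_pos ht]; simp
        | coe x => rw [← EReal.coe_mul]; exact EReal.coe_ne_bot _
      rw [h1, EReal.add_top_of_ne_bot h2]
      exact le_top
    · lift x to ℝ using ⟨hxt, hx⟩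
      lift y to ℝ using ⟨hyt, hy⟩
      rw [← EReal.coe_neg, ← EReal.coe_neg, pp_coe, pp_coe, pp_coe, pp_coe]
      have hA : ENNReal.ofReal t * ENNReal.ofReal x + ENNReal.ofReal (1 - t) * ENNReal.ofReal y ≠ ⊤ :=
        ENNReal.add_ne_top.2 ⟨ENNReal.mul_ne_top ofReal_ne_top ofReal_ne_top,
          ENNReal.mul_ne_top ofReal_ne_top ofReal_ne_top⟩
      have hB : ENNReal.ofReal t * ENNReal.ofReal (-x) + ENNReal.ofReal (1 - t) * ENNReal.ofReal (-y) ≠ ⊤ :=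
        ENNReal.add_ne_top.2 ⟨ENNReal.mul_ne_top ofReal_ne_top ofReal_ne_top,
          ENNReal.mul_ne_top ofReal_ne_top ofReal_ne_top⟩
      rw [coe_ennreal_fin hA, coe_ennreal_fin hB, ← EReal.coe_sub, ← EReal.coe_mul,
        ← EReal.coe_mul, ← EReal.coe_add, EReal.coe_le_coe_iff]
      rw [ENNReal.toReal_add (ENNReal.mul_ne_top ofReal_ne_top ofReal_ne_top)
          (ENNReal.mul_ne_top ofReal_ne_top ofReal_ne_top),
        ENNReal.toReal_add (ENNReal.mul_ne_top ofReal_ne_top ofReal_ne_top)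
          (ENNReal.mul_ne_top ofReal_ne_top ofReal_ne_top),
        ENNReal.toReal_mul, ENNReal.toReal_mul, ENNReal.toReal_mul, ENNReal.toReal_mul,
        ENNReal.toReal_ofReal ht.le, ENNReal.toReal_ofReal (by linarith : (0:ℝ) ≤ 1 - t),
        ENNReal.toReal_ofReal', ENNReal.toReal_ofReal', ENNReal.toReal_ofReal',
        ENNReal.toReal_ofReal']
      have e1 := hmax x
      have e2 := hmax y
      nlinarith [e1, e2]

lemma int_dirac {m : ℕ} (a : Fin m → ℝ) :
    Integrable (id : (Fin m → ℝ) → (Fin m → ℝ)) (Measure.dirac a) := by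
  constructor
  · exact aestronglyMeasurable_id
  · simp [HasFiniteIntegral, lintegral_dirac]

end SepAux


namespace SepAux

lemma lint_combo_left {m : ℕ} (h : ((Fin m → ℝ) × (Fin m → ℝ)) → ℝ≥0∞) (hmeas : Measurable h)
    (a b' ξ : Fin m → ℝ) (t : ℝ) :
    ∫⁻ p, h p ∂((ENNReal.ofReal t • Measure.dirac a
        + ENNReal.ofReal (1 - t) • Measure.dirac b').prod (Measure.dirac ξ))
      = ENNReal.ofReal t * h (a, ξ) + ENNReal.ofReal (1 - t) * h (b', ξ) := by
  haveI : IsFiniteMeasure (ENNReal.ofReal t • Measure.dirac a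
      + ENNReal.ofReal (1 - t) • Measure.dirac b' : Measure (Fin m → ℝ)) := by
    constructor
    simp only [Measure.add_apply, Measure.smul_apply, smul_eq_mul]
    exact ENNReal.add_lt_top.2 ⟨ENNReal.mul_lt_top ofReal_lt_top (by simp [Measure.dirac_apply_of_mem (Set.mem_univ _)]),
      ENNReal.mul_lt_top ofReal_lt_top (by simp [Measure.dirac_apply_of_mem (Set.mem_univ _)])⟩
  rw [lintegral_prod _ hmeas.aemeasurable, lintegral_add_measure, lintegral_smul_measure,
    lintegral_smul_measure, lintegral_dirac, lintegral_dirac, lintegral_dirac, lintegral_dirac,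
    smul_eq_mul, smul_eq_mul]

lemma lint_combo_right {m : ℕ} (h : ((Fin m → ℝ) × (Fin m → ℝ)) → ℝ≥0∞) (hmeas : Measurable h)
    (a b' ξ : Fin m → ℝ) (t : ℝ) :
    ∫⁻ p, h p ∂((Measure.dirac ξ).prod (ENNReal.ofReal t • Measure.dirac a
        + ENNReal.ofReal (1 - t) • Measure.dirac b'))
      = ENNReal.ofReal t * h (ξ, a) + ENNReal.ofReal (1 - t) * h (ξ, b') := by
  haveI : IsFiniteMeasure (ENNReal.ofReal t • Measure.dirac a
      + ENNReal.ofReal (1 - t) • Measure.dirac b' : Measure (Fin m → ℝ)) := by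
    constructor
    simp only [Measure.add_apply, Measure.smul_apply, smul_eq_mul]
    exact ENNReal.add_lt_top.2 ⟨ENNReal.mul_lt_top ofReal_lt_top (by simp [Measure.dirac_apply_of_mem (Set.mem_univ _)]),
      ENNReal.mul_lt_top ofReal_lt_top (by simp [Measure.dirac_apply_of_mem (Set.mem_univ _)])⟩
  rw [lintegral_prod _ hmeas.aemeasurable, lintegral_dirac, lintegral_add_measure,
    lintegral_smul_measure, lintegral_smul_measure, lintegral_dirac, lintegral_dirac,
    smul_eq_mul, smul_eq_mul]

end SepAux

theorem sepConvex_iff_jensen {m : ℕ} (W : (Fin m → ℝ) × (Fin m → ℝ) → EReal)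
    (hlsc : LowerSemicontinuous W) (hbd : ∃ C : ℝ, ∀ p, (C : EReal) ≤ W p) :
    SepConvexFnE W ↔
      ∀ ν μ : Measure (Fin m → ℝ), IsProbabilityMeasure ν → IsProbabilityMeasure μ →
        Integrable id ν → Integrable id μ →
        W (∫ x, x ∂ν, ∫ x, x ∂μ) ≤ elint (ν.prod μ) W := by
  obtain ⟨C₀, hC₀⟩ := hbd
  set C := min C₀ 0 with hCdef
  have hC : C ≤ 0 := min_le_right _ _
  have hCW : ∀ p, (C : EReal) ≤ W p := fun p =>
    le_trans (EReal.coe_le_coe_iff.2 (min_le_left _ _)) (hC₀ p)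
  have hWmeas : Measurable W := hlsc.measurable
  have hWne_bot : ∀ p, W p ≠ ⊥ := fun p => ((EReal.bot_lt_coe C).trans_le (hCW p)).ne'
  constructor
  · -- separately convex implies Jensen
    intro hsep ν μ hν hμ hiν hiμ
    haveI := hν; haveI := hμ
    have hG : Measurable fun p => _root_.posPart (W p - (C : EReal)) :=
      (SepAux.measurable_ppSub C).comp hWmeas
    rw [SepAux.elint_eq (ν.prod μ) hWmeas hC hCW, lintegral_prod _ hG.aemeasurable]
    have inner : ∀ ξ : Fin m → ℝ, _root_.posPart (W (ξ, ∫ x, x ∂μ) - (C : EReal))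
        ≤ ∫⁻ ζ, _root_.posPart (W (ξ, ζ) - (C : EReal)) ∂μ := by
      intro ξ
      apply SepAux.pp_sub_le (hCW _)
      exact SepAux.jensen (LowerSemicontinuous.comp hlsc (Continuous.prodMk_right ξ)) hC
        (fun ζ => hCW _) (hsep ξ).2 μ hiμ
    have outer : W (∫ x, x ∂ν, ∫ x, x ∂μ)
        ≤ ((∫⁻ ξ, _root_.posPart (W (ξ, ∫ x, x ∂μ) - (C : EReal)) ∂ν : ℝ≥0∞) : EReal) + (C : EReal) :=
      SepAux.jensen (LowerSemicontinuous.comp hlsc (continuous_id.prodMk continuous_const)) hC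
        (fun ξ => hCW _) (fun a b t ht => (hsep (∫ x, x ∂μ)).1 a b t ht) ν hiν
    calc W (∫ x, x ∂ν, ∫ x, x ∂μ)
        ≤ ((∫⁻ ξ, _root_.posPart (W (ξ, ∫ x, x ∂μ) - (C : EReal)) ∂ν : ℝ≥0∞) : EReal) + (C : EReal) :=
          outer
      _ ≤ ((∫⁻ ξ, ∫⁻ ζ, _root_.posPart (W (ξ, ζ) - (C : EReal)) ∂μ ∂ν : ℝ≥0∞) : EReal) + (C : EReal) :=
          add_le_add_left
            (EReal.coe_ennreal_le_coe_ennreal_iff.2 (lintegral_mono inner)) _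
  · -- Jensen implies separately convex
    intro hJ ξ
    have hPP : Measurable fun p => _root_.posPart (W p) := SepAux.measurable_pp.comp hWmeas
    have hNN : Measurable fun p => _root_.posPart (-(W p)) :=
      SepAux.measurable_pp.comp (continuous_neg.measurable.comp hWmeas)
    constructor
    · intro a b' t ht
      set ν : Measure (Fin m → ℝ) :=
        ENNReal.ofReal t • Measure.dirac a + ENNReal.ofReal (1 - t) • Measure.dirac b' with hνdef
      have hν : IsProbabilityMeasure ν := by
        constructor
        simp only [hνdef, Measure.add_apply, Measure.smul_apply, smul_eq_mul,
          Measure.dirac_apply_of_mem (Set.mem_univ _), mul_one]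
        rw [← ENNReal.ofReal_add ht.1.le (by linarith [ht.2])]
        norm_num
      have hiν : Integrable id ν :=
        ((SepAux.int_dirac a).smul_measure ofReal_ne_top).add_measure
          ((SepAux.int_dirac b').smul_measure ofReal_ne_top)
      have ia : Integrable (fun x : Fin m → ℝ => x) (ENNReal.ofReal t • Measure.dirac a) :=
        (SepAux.int_dirac a).smul_measure ofReal_ne_top
      have ib : Integrable (fun x : Fin m → ℝ => x) (ENNReal.ofReal (1 - t) • Measure.dirac b') :=
        (SepAux.int_dirac b').smul_measure ofReal_ne_top
      have hb1 : ∫ x, x ∂ν = t • a + (1 - t) • b' := by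
        rw [hνdef, integral_add_measure ia ib,
          integral_smul_measure, integral_smul_measure,
          integral_dirac (fun x : Fin m → ℝ => x) a, integral_dirac (fun x : Fin m → ℝ => x) b',
          ENNReal.toReal_ofReal ht.1.le, ENNReal.toReal_ofReal (by linarith [ht.2])]
      have hb2 : ∫ x, x ∂(Measure.dirac ξ) = ξ := integral_dirac _ _
      have h1 := hJ ν (Measure.dirac ξ) hν (by infer_instance) hiν (SepAux.int_dirac ξ)
      rw [hb1, hb2] at h1
      refine h1.trans ?_
      rw [elint, SepAux.lint_combo_left _ hPP a b' ξ t, SepAux.lint_combo_left _ hNN a b' ξ t]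
      exact SepAux.combo_le (hWne_bot _) (hWne_bot _) ht.1 ht.2
    · intro a b' t ht
      set ν : Measure (Fin m → ℝ) :=
        ENNReal.ofReal t • Measure.dirac a + ENNReal.ofReal (1 - t) • Measure.dirac b' with hνdef
      have hν : IsProbabilityMeasure ν := by
        constructor
        simp only [hνdef, Measure.add_apply, Measure.smul_apply, smul_eq_mul,
          Measure.dirac_apply_of_mem (Set.mem_univ _), mul_one]
        rw [← ENNReal.ofReal_add ht.1.le (by linarith [ht.2])]
        norm_num
      have hiν : Integrable id ν :=
        ((SepAux.int_dirac a).smul_measure ofReal_ne_top).add_measure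
          ((SepAux.int_dirac b').smul_measure ofReal_ne_top)
      have ia : Integrable (fun x : Fin m → ℝ => x) (ENNReal.ofReal t • Measure.dirac a) :=
        (SepAux.int_dirac a).smul_measure ofReal_ne_top
      have ib : Integrable (fun x : Fin m → ℝ => x) (ENNReal.ofReal (1 - t) • Measure.dirac b') :=
        (SepAux.int_dirac b').smul_measure ofReal_ne_top
      have hb1 : ∫ x, x ∂ν = t • a + (1 - t) • b' := by
        rw [hνdef, integral_add_measure ia ib,
          integral_smul_measure, integral_smul_measure,
          integral_dirac (fun x : Fin m → ℝ => x) a, integral_dirac (fun x : Fin m → ℝ => x) b',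
          ENNReal.toReal_ofReal ht.1.le, ENNReal.toReal_ofReal (by linarith [ht.2])]
      have hb2 : ∫ x, x ∂(Measure.dirac ξ) = ξ := integral_dirac _ _
      have h1 := hJ (Measure.dirac ξ) ν (by infer_instance) hν (SepAux.int_dirac ξ) hiν
      rw [hb1, hb2] at h1
      refine h1.trans ?_
      rw [elint, SepAux.lint_combo_right _ hPP a b' ξ t, SepAux.lint_combo_right _ hNN a b' ξ t]
      exact SepAux.combo_le (hWne_bot _) (hWne_bot _) ht.1 ht.2
end

section
/- Let Ω ⊆ ℝ^n be a nonempty bounded open set and E ⊆ ℝ^m × ℝ^m symmetric and diagonal. Then for every u ∈ 𝒜_E there exists a sequence of simple (finitely-valued measurable) functions u_j ∈ 𝒜_E with u_j → u in L^∞(Ω;ℝ^m) (uniform convergence a.e.). In particular, if u ∈ 𝒜_E is bounded, then for every ε > 0 there is a simple function v ∈ 𝒜_E with ‖u − v‖_{L^∞} < ε. -/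
open Set

open MeasureTheory

/-- The class 𝒜_E of essentially bounded functions u on Ω with (u(x),u(y)) ∈ E a.e. -/
def AA {n m : ℕ} (Ω : Set (Fin n → ℝ)) (E : Set ((Fin m → ℝ) × (Fin m → ℝ))) :
    Set ((Fin n → ℝ) → (Fin m → ℝ)) :=
  {u | MemLp u ⊤ (volume.restrict Ω) ∧
    ∀ᵐ p ∂((volume.restrict Ω).prod (volume.restrict Ω)), (u p.1, u p.2) ∈ E}



section ListAux

variable {α β : Type*}

lemma forall₂_zip_mem {R : α → β → Prop} :
    ∀ {l₁ : List α} {l₂ : List β}, List.Forall₂ R l₁ l₂ →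
      ∀ {p : α × β}, p ∈ l₁.zip l₂ → R p.1 p.2 := by
  intro l₁ l₂ h
  induction h with
  | nil => intro p hp; simp at hp
  | cons hab _ ih =>
    intro p hp
    rw [List.zip_cons_cons, List.mem_cons] at hp
    rcases hp with rfl | hp
    · exact hab
    · exact ih hp

lemma forall₂_zip_partner {R : α → β → Prop} :
    ∀ {l₁ : List α} {l₂ : List β}, List.Forall₂ R l₁ l₂ →
      ∀ {a : α}, a ∈ l₁ → ∃ b : β, (a, b) ∈ l₁.zip l₂ := by
  intro l₁ l₂ h
  induction h with
  | nil => intro a ha; simp at ha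
  | @cons a' b' l₁' l₂' hab _ ih =>
    intro a ha
    rw [List.mem_cons] at ha
    rcases ha with rfl | ha
    · exact ⟨b', by rw [List.zip_cons_cons]; exact List.mem_cons_self⟩
    · obtain ⟨b, hb⟩ := ih ha
      exact ⟨b, by rw [List.zip_cons_cons]; exact List.mem_cons_of_mem _ hb⟩

lemma mem_of_mem_zip_right {p : α × β} :
    ∀ {l₁ : List α} {l₂ : List β}, p ∈ l₁.zip l₂ → p.2 ∈ l₂ := by
  intro l₁
  induction l₁ with
  | nil => intro l₂ hp; simp [List.zip] at hp
  | cons a l₁ ih =>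
    intro l₂ hp
    cases l₂ with
    | nil => simp at hp
    | cons b l₂ =>
      rw [List.zip_cons_cons, List.mem_cons] at hp
      rcases hp with rfl | hp
      · exact List.mem_cons_self
      · exact List.mem_cons_of_mem _ (ih hp)

end ListAux


noncomputable def pwFun {m : ℕ} (r : ℝ) (a₀ : Fin m → ℝ) :
    List ((Fin m → ℝ) × (Fin m → ℝ)) → (Fin m → ℝ) → (Fin m → ℝ)
  | [] => fun _ => a₀
  | p :: L => fun z => if dist z p.1 < r then p.2 else pwFun r a₀ L z

lemma pwFun_measurable {m : ℕ} (r : ℝ) (a₀ : Fin m → ℝ)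
    (L : List ((Fin m → ℝ) × (Fin m → ℝ))) : Measurable (pwFun r a₀ L) := by
  induction L with
  | nil => exact measurable_const
  | cons p L ih =>
    have : MeasurableSet {z : Fin m → ℝ | dist z p.1 < r} := by
      simpa [Metric.ball] using (measurableSet_ball : MeasurableSet (Metric.ball p.1 r))
    exact Measurable.ite this measurable_const ih

lemma pwFun_range_finite {m : ℕ} (r : ℝ) (a₀ : Fin m → ℝ)
    (L : List ((Fin m → ℝ) × (Fin m → ℝ))) : (Set.range (pwFun r a₀ L)).Finite := by
  induction L with
  | nil => exact (Set.finite_singleton a₀).subset (by rintro _ ⟨z, rfl⟩; simp [pwFun])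
  | cons p L ih =>
    refine (ih.insert p.2).subset ?_
    rintro _ ⟨z, rfl⟩
    by_cases h : dist z p.1 < r
    · simp [pwFun, h]
    · simp only [pwFun, h, if_false]
      exact Set.mem_insert_of_mem _ ⟨z, rfl⟩

lemma pwFun_hit {m : ℕ} (r : ℝ) (a₀ : Fin m → ℝ)
    (L : List ((Fin m → ℝ) × (Fin m → ℝ))) (z : Fin m → ℝ)
    (h : ∃ p ∈ L, dist z p.1 < r) :
    ∃ p ∈ L, dist z p.1 < r ∧ pwFun r a₀ L z = p.2 := by
  induction L with
  | nil => simp at h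
  | cons q L ih =>
    by_cases hq : dist z q.1 < r
    · exact ⟨q, List.mem_cons_self, hq, by simp [pwFun, hq]⟩
    · obtain ⟨p, hpL, hpz⟩ := h
      rw [List.mem_cons] at hpL
      rcases hpL with rfl | hpL
      · exact absurd hpz hq
      · obtain ⟨p', hp'L, hp'z, hp'eq⟩ := ih ⟨p, hpL, hpz⟩
        exact ⟨p', List.mem_cons_of_mem _ hp'L, hp'z, by simp [pwFun, hq, hp'eq]⟩


lemma pick_list {α β : Type*} [MeasurableSpace α] (μ : Measure α) (hμ : μ ≠ 0)
    (E : Set (β × β)) (hsym : ∀ p ∈ E, (p.2, p.1) ∈ E)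
    (hdiag : ∀ p ∈ E, (p.1, p.1) ∈ E ∧ (p.2, p.2) ∈ E)
    (f : α → β) (hE : ∀ᵐ x ∂μ, ∀ᵐ y ∂μ, (f x, f y) ∈ E) :
    ∀ (S : List (Set α)), (∀ s ∈ S, 0 < μ s) →
    ∀ (W : Set α), (∀ᵐ x ∂μ, x ∈ W) →
    ∃ as : List β, List.Forall₂ (fun s a => ∃ x ∈ s, f x = a) S as ∧
      (∀ a ∈ as, ∃ x ∈ W, f x = a) ∧
      (∀ a ∈ as, ∀ b ∈ as, (a, b) ∈ E) := by
  haveI : (MeasureTheory.ae μ).NeBot := ae_neBot.mpr hμ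
  intro S
  induction S with
  | nil => intro _ W hW; exact ⟨[], List.Forall₂.nil, by simp, by simp⟩
  | cons s S ih =>
    intro hS W hW
    have hs : 0 < μ s := hS s (List.mem_cons_self)
    set T : Set α := {x | (∀ᵐ y ∂μ, (f x, f y) ∈ E)} with hT
    have hWT : ∀ᵐ x ∂μ, x ∈ W ∩ T := by
      filter_upwards [hW, hE] with x h1 h2 using ⟨h1, h2⟩
    have h0 : μ (W ∩ T)ᶜ = 0 := by
      have h := ae_iff.mp hWT
      have he : (W ∩ T)ᶜ = {x | ¬ x ∈ W ∩ T} := rfl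
      rwa [he]
    have hpos : 0 < μ (s ∩ (W ∩ T)) := by
      rwa [measure_inter_conull h0]
    obtain ⟨x, hxs, hxW, hxT⟩ := nonempty_of_measure_ne_zero hpos.ne'
    have hxT : ∀ᵐ y ∂μ, (f x, f y) ∈ E := hxT
    have hxx : (f x, f x) ∈ E := by
      obtain ⟨y, hy⟩ := hxT.exists
      exact (hdiag (f x, f y) hy).1
    have hW' : ∀ᵐ y ∂μ, y ∈ W ∩ {y | (f x, f y) ∈ E} := by
      filter_upwards [hW, hxT] with y h1 h2 using ⟨h1, h2⟩
    obtain ⟨as, h1, h2, h3⟩ := ih (fun t ht => hS t (List.mem_cons_of_mem _ ht)) _ hW'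
    refine ⟨f x :: as, List.Forall₂.cons ⟨x, hxs, rfl⟩ h1, ?_, ?_⟩
    · intro a ha
      rw [List.mem_cons] at ha
      rcases ha with rfl | ha
      · exact ⟨x, hxW, rfl⟩
      · obtain ⟨y, hy, hya⟩ := h2 a ha
        exact ⟨y, hy.1, hya⟩
    · intro a ha b hb
      rw [List.mem_cons] at ha hb
      have key : ∀ c ∈ as, (f x, c) ∈ E := by
        intro c hc
        obtain ⟨y, hy, hyc⟩ := h2 c hc
        exact hyc ▸ hy.2
      rcases ha with rfl | ha <;> rcases hb with rfl | hb
      · exact hxx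
      · exact key b hb
      · exact hsym _ (key a ha)
      · exact h3 a ha b hb
lemma AA_key {n m : ℕ} (Ω : Set (Fin n → ℝ)) (hΩne : Ω.Nonempty) (hΩo : IsOpen Ω)
    (E : Set ((Fin m → ℝ) × (Fin m → ℝ)))
    (hsym : ∀ p ∈ E, (p.2, p.1) ∈ E)
    (hdiag : ∀ p ∈ E, (p.1, p.1) ∈ E ∧ (p.2, p.2) ∈ E)
    (u : (Fin n → ℝ) → (Fin m → ℝ)) (hu : u ∈ AA Ω E) {ε : ℝ} (hε : 0 < ε) :
    ∃ v, v ∈ AA Ω E ∧ Measurable v ∧ (Set.range v).Finite ∧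
      eLpNorm (u - v) ⊤ (volume.restrict Ω) ≤ ENNReal.ofReal (ε / 2) := by
  classical
  set μ : Measure (Fin n → ℝ) := volume.restrict Ω with hμdef
  have hμ0 : μ ≠ 0 := by
    rw [← Measure.measure_univ_ne_zero, hμdef, Measure.restrict_apply_univ]
    exact (hΩo.measure_pos volume hΩne).ne'
  obtain ⟨hmem, hpair⟩ := hu
  set u' : (Fin n → ℝ) → (Fin m → ℝ) := hmem.1.mk u with hu'def
  have hu'm : Measurable u' := hmem.1.stronglyMeasurable_mk.measurable
  have huu' : u =ᵐ[μ] u' := hmem.1.ae_eq_mk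
  set C : ℝ := (eLpNormEssSup u μ).toReal with hCdef
  have hCbd : ∀ᵐ x ∂μ, ‖u x‖ ≤ C := by
    have hlt : eLpNormEssSup u μ < ⊤ := by
      have h2 := hmem.2; rwa [eLpNorm_exponent_top] at h2
    filter_upwards [ae_le_eLpNormEssSup (f := u) (μ := μ)] with x hx
    have := ENNReal.toReal_mono hlt.ne hx
    simpa using this
  set r : ℝ := ε / 4 with hrdef
  have hrpos : 0 < r := by positivity
  have hKc : IsCompact (Metric.closedBall (0 : Fin m → ℝ) C) := isCompact_closedBall _ _
  obtain ⟨b', hb'sub, hb'fin, hb'cov⟩ :=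
    hKc.elim_finite_subcover_image (fun z _ => Metric.isOpen_ball (x := z) (ε := r))
      (fun z hz => Set.mem_biUnion hz (Metric.mem_ball_self hrpos))
  set L : List (Fin m → ℝ) := hb'fin.toFinset.toList with hLdef
  have hmemL : ∀ c, c ∈ L ↔ c ∈ b' := by
    intro c; rw [hLdef, Finset.mem_toList, Set.Finite.mem_toFinset]
  set P : (Fin m → ℝ) → Set (Fin n → ℝ) := fun c => u' ⁻¹' Metric.ball c r with hPdef
  set cs : List (Fin m → ℝ) := L.filter (fun c => decide (0 < μ (P c))) with hcsdef
  have hmemcs : ∀ c, c ∈ cs ↔ c ∈ b' ∧ 0 < μ (P c) := by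
    intro c
    rw [hcsdef, List.mem_filter, hmemL, decide_eq_true_eq]
  set S : List (Set (Fin n → ℝ)) := cs.map P with hSdef
  have hSpos : ∀ s ∈ S, 0 < μ s := by
    intro s hs
    rw [hSdef, List.mem_map] at hs
    obtain ⟨c, hc, rfl⟩ := hs
    exact ((hmemcs c).mp hc).2
  have hqf : Measure.QuasiMeasurePreserving (Prod.fst : _ × _ → _) (μ.prod μ) μ :=
    Measure.quasiMeasurePreserving_fst
  have hqs : Measure.QuasiMeasurePreserving (Prod.snd : _ × _ → _) (μ.prod μ) μ :=
    Measure.quasiMeasurePreserving_snd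
  have hpair' : ∀ᵐ p ∂μ.prod μ, (u' p.1, u' p.2) ∈ E := by
    filter_upwards [hpair, hqf.ae huu', hqs.ae huu'] with p h1 h2 h3
    rw [← h2, ← h3]; exact h1
  have hE' : ∀ᵐ x ∂μ, ∀ᵐ y ∂μ, (u' x, u' y) ∈ E := Measure.ae_ae_of_ae_prod hpair'
  obtain ⟨as, hF, -, hasE⟩ :=
    pick_list μ hμ0 E hsym hdiag u' hE' S hSpos Set.univ
      (Filter.Eventually.of_forall fun _ => trivial)
  have hF2 : List.Forall₂ (fun c a => ∃ x ∈ P c, u' x = a) cs as :=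
    List.forall₂_map_left_iff.mp hF
  set zipL : List ((Fin m → ℝ) × (Fin m → ℝ)) := cs.zip as with hzipdef
  set v : (Fin n → ℝ) → (Fin m → ℝ) := fun x => pwFun r 0 zipL (u' x) with hvdef
  have hvmeas : Measurable v := (pwFun_measurable r 0 zipL).comp hu'm
  have hvfin : (Set.range v).Finite := (pwFun_range_finite r 0 zipL).subset
    (by rintro _ ⟨x, rfl⟩; exact ⟨u' x, rfl⟩)
  set G : Set (Fin n → ℝ) := {x | ∃ p ∈ zipL, dist (u' x) p.1 < r} with hGdef
  have hdrop : ∀ L' : List (Fin m → ℝ),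
      ∀ᵐ x ∂μ, ∀ c ∈ L', μ (P c) = 0 → x ∉ P c := by
    intro L'
    induction L' with
    | nil => simp
    | cons c L' ih =>
      have hc : ∀ᵐ x ∂μ, μ (P c) = 0 → x ∉ P c := by
        by_cases h : μ (P c) = 0
        · filter_upwards [measure_eq_zero_iff_ae_notMem.mp h] with x hx using fun _ => hx
        · filter_upwards with x using fun h' => absurd h' h
      filter_upwards [hc, ih] with x h1 h2
      intro c' hc'
      rcases List.mem_cons.mp hc' with rfl | h
      · exact h1
      · exact h2 c' h
  have hGae : ∀ᵐ x ∂μ, x ∈ G := by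
    filter_upwards [huu', hCbd, hdrop L] with x hux hCx hdx
    have hx' : u' x ∈ Metric.closedBall (0 : Fin m → ℝ) C := by
      rw [Metric.mem_closedBall, dist_zero_right, ← hux]; exact hCx
    obtain ⟨c, hcb', hcball⟩ := Set.mem_iUnion₂.mp (hb'cov hx')
    have hcL : c ∈ L := (hmemL c).mpr hcb'
    have hPc : x ∈ P c := hcball
    have hpos : 0 < μ (P c) := by
      rcases eq_or_ne (μ (P c)) 0 with h | h
      · exact absurd hPc (hdx c hcL h)
      · exact pos_iff_ne_zero.mpr h
    have hccs : c ∈ cs := (hmemcs c).mpr ⟨hcb', hpos⟩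
    obtain ⟨a, ha⟩ := forall₂_zip_partner hF2 hccs
    exact ⟨(c, a), ha, by simpa [Metric.mem_ball] using hcball⟩
  have hGprop : ∀ x ∈ G, v x ∈ as ∧ dist (u' x) (v x) < 2 * r := by
    intro x hx
    obtain ⟨p, hpz, hpd, hpe⟩ := pwFun_hit r 0 zipL (u' x) hx
    have hvx : v x = p.2 := hpe
    constructor
    · rw [hvx]; exact mem_of_mem_zip_right hpz
    · obtain ⟨y, hy, hye⟩ := forall₂_zip_mem hF2 hpz
      have hyp : dist p.2 p.1 < r := by
        rw [← hye]
        exact hy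
      calc dist (u' x) (v x) = dist (u' x) p.2 := by rw [hvx]
        _ ≤ dist (u' x) p.1 + dist p.1 p.2 := dist_triangle _ _ _
        _ < r + r := add_lt_add hpd (by rwa [dist_comm])
        _ = 2 * r := by ring
  have hvpair : ∀ᵐ p ∂μ.prod μ, (v p.1, v p.2) ∈ E := by
    filter_upwards [hqf.ae hGae, hqs.ae hGae] with p h1 h2
    exact hasE _ (hGprop _ h1).1 _ (hGprop _ h2).1
  obtain ⟨R, hR⟩ : ∃ R : ℝ, ∀ x, ‖v x‖ ≤ R := by
    obtain ⟨R, hR⟩ := hvfin.isBounded.subset_closedBall 0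
    exact ⟨R, fun x => by simpa [mem_closedBall_zero_iff] using hR ⟨x, rfl⟩⟩
  have hvmem : MemLp v ⊤ μ :=
    memLp_top_of_bound hvmeas.aestronglyMeasurable R (Filter.Eventually.of_forall hR)
  refine ⟨v, ⟨hvmem, hvpair⟩, hvmeas, hvfin, ?_⟩
  rw [eLpNorm_exponent_top]
  refine eLpNormEssSup_le_of_ae_bound (C := ε / 2) ?_
  filter_upwards [huu', hGae] with x hux hxG
  have hd := (hGprop x hxG).2
  have : dist (u x) (v x) < ε / 2 := by
    rw [hux]
    calc dist (u' x) (v x) < 2 * r := hd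
      _ = ε / 2 := by rw [hrdef]; ring
  rw [Pi.sub_apply, ← dist_eq_norm]
  exact this.le

theorem AA_simple_approx {n m : ℕ} (Ω : Set (Fin n → ℝ))
    (hΩne : Ω.Nonempty) (hΩo : IsOpen Ω) (hΩb : Bornology.IsBounded Ω)
    (E : Set ((Fin m → ℝ) × (Fin m → ℝ)))
    (hsym : ∀ p ∈ E, (p.2, p.1) ∈ E)
    (hdiag : ∀ p ∈ E, (p.1, p.1) ∈ E ∧ (p.2, p.2) ∈ E)
    (u : (Fin n → ℝ) → (Fin m → ℝ)) (hu : u ∈ AA Ω E) :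
    (∃ v : ℕ → (Fin n → ℝ) → (Fin m → ℝ),
      (∀ j, v j ∈ AA Ω E ∧ Measurable (v j) ∧ (Set.range (v j)).Finite) ∧
      Filter.Tendsto (fun j => eLpNorm (u - v j) ⊤ (volume.restrict Ω))
        Filter.atTop (nhds 0)) ∧
    (∀ ε : ℝ, 0 < ε → ∃ v : (Fin n → ℝ) → (Fin m → ℝ),
      v ∈ AA Ω E ∧ Measurable v ∧ (Set.range v).Finite ∧
      eLpNorm (u - v) ⊤ (volume.restrict Ω) < ENNReal.ofReal ε) := by

  have key : ∀ ε : ℝ, 0 < ε → ∃ v : (Fin n → ℝ) → (Fin m → ℝ),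
      v ∈ AA Ω E ∧ Measurable v ∧ (Set.range v).Finite ∧
      eLpNorm (u - v) ⊤ (volume.restrict Ω) < ENNReal.ofReal ε := by
    intro ε hε
    obtain ⟨v, h1, h2, h3, h4⟩ := AA_key Ω hΩne hΩo E hsym hdiag u hu hε
    refine ⟨v, h1, h2, h3, lt_of_le_of_lt h4 ?_⟩
    exact (ENNReal.ofReal_lt_ofReal_iff hε).mpr (half_lt_self hε)
  refine ⟨?_, key⟩
  choose v hv1 hv2 hv3 hv4 using fun j : ℕ => key ((j : ℝ) + 1)⁻¹ (by positivity)
  refine ⟨v, fun j => ⟨hv1 j, hv2 j, hv3 j⟩, ?_⟩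
  have h0 : Filter.Tendsto (fun j : ℕ => ENNReal.ofReal ((j : ℝ) + 1)⁻¹)
      Filter.atTop (nhds 0) := by
    have ht : Filter.Tendsto (fun j : ℕ => ((j : ℝ) + 1)⁻¹) Filter.atTop (nhds 0) := by
      simpa [one_div] using tendsto_one_div_add_atTop_nhds_zero_nat (𝕜 := ℝ)
    have := ENNReal.tendsto_ofReal ht
    simpa using this
  exact tendsto_of_tendsto_of_tendsto_of_le_of_le tendsto_const_nhds h0
    (fun j => zero_le) (fun j => (hv4 j).le)
end

section
/- Let Ω ⊆ ℝ^n be a nonempty bounded open set and E ⊆ ℝ^m × ℝ^m closed. Then 𝒜_E = ⋃_{P ∈ 𝒫_E} 𝒜_P, i.e. every u ∈ L^∞(Ω;ℝ^m) with (u(x),u(y)) ∈ E for a.e. (x,y) satisfies (u(x),u(y)) ∈ A × A for a.e. (x,y), for some set A ⊆ ℝ^m with A × A ⊆ E contained in a maximal Cartesian subset of E. -/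
open Set

open MeasureTheory

theorem AA_eq_union_maxCart {n m : ℕ} (Ω : Set (Fin n → ℝ))
    (hΩne : Ω.Nonempty) (hΩo : IsOpen Ω) (hΩb : Bornology.IsBounded Ω)
    (E : Set ((Fin m → ℝ) × (Fin m → ℝ))) (hE : IsClosed E) :
    AA Ω E = ⋃ P ∈ {P | IsMaxCart E P}, AA Ω P := by
  apply Set.Subset.antisymm
  · intro u hu
    obtain ⟨hmem, hae⟩ := hu
    set μ := (volume : Measure (Fin n → ℝ)).restrict Ω with hμdef
    -- the essential range of u
    set A : Set (Fin m → ℝ) := {v | ∀ ε > 0, μ (u ⁻¹' Metric.ball v ε) ≠ 0} with hAdef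
    -- Step 1: a.e. x, u x ∈ A
    have hA_ae : ∀ᵐ x ∂μ, u x ∈ A := by
      obtain ⟨D, hDc, hDd⟩ := TopologicalSpace.exists_countable_dense (Fin m → ℝ)
      set T : Set ((Fin m → ℝ) × ℚ) :=
        {dq | μ (u ⁻¹' Metric.ball dq.1 (dq.2 : ℝ)) = 0} ∩ (D ×ˢ univ) with hTdef
      have hTc : T.Countable := (hDc.prod countable_univ).mono inter_subset_right
      have hnull : μ (⋃ dq ∈ T, u ⁻¹' Metric.ball dq.1 (dq.2 : ℝ)) = 0 :=
        (measure_biUnion_null_iff hTc).2 fun dq hdq => hdq.1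
      rw [ae_iff]
      refine measure_mono_null ?_ hnull
      intro x hx
      simp only [hAdef, mem_setOf_eq, not_forall] at hx
      obtain ⟨ε, hε, h0⟩ := hx
      rw [not_ne_iff] at h0
      obtain ⟨d, hdD, hdist⟩ := hDd.exists_dist_lt (u x) (by positivity : (0:ℝ) < ε / 4)
      obtain ⟨q, hq1, hq2⟩ := exists_rat_btwn (by linarith : ε / 4 < ε / 2)
      have hball_sub : Metric.ball d (q : ℝ) ⊆ Metric.ball (u x) ε := by
        intro y hy
        rw [Metric.mem_ball] at hy ⊢
        have : dist y (u x) ≤ dist y d + dist d (u x) := dist_triangle _ _ _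
        rw [dist_comm d (u x)] at this
        linarith
      have hmemT : (d, q) ∈ T := by
        constructor
        · exact measure_mono_null (preimage_mono hball_sub) h0
        · exact ⟨hdD, mem_univ _⟩
      refine mem_biUnion hmemT ?_
      simp only [mem_preimage, Metric.mem_ball]
      linarith [hdist]
    -- Step 2: A ×ˢ A ⊆ E
    have hAE : A ×ˢ A ⊆ E := by
      rintro ⟨v, w⟩ ⟨hv, hw⟩
      by_contra hvw
      obtain ⟨ε, hε, hball⟩ := Metric.isOpen_iff.1 hE.isOpen_compl _ hvw
      have hsub : (u ⁻¹' Metric.ball v ε) ×ˢ (u ⁻¹' Metric.ball w ε) ⊆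
          {p : (Fin n → ℝ) × (Fin n → ℝ) | ¬ (u p.1, u p.2) ∈ E} := by
        rintro ⟨x, y⟩ ⟨hx, hy⟩
        have : (u x, u y) ∈ Metric.ball (v, w) ε := by
          rw [← ball_prod_same]; exact ⟨hx, hy⟩
        exact hball this
      have h0 : (μ.prod μ) ((u ⁻¹' Metric.ball v ε) ×ˢ (u ⁻¹' Metric.ball w ε)) = 0 :=
        measure_mono_null hsub (ae_iff.1 hae)
      rw [Measure.prod_prod] at h0
      exact absurd h0 (mul_ne_zero (hv ε hε) (hw ε hε))
    -- Step 3: Zorn, extend A to a maximal Cartesian subset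
    obtain ⟨B, hAB, hBE, hBmax⟩ :
        ∃ B, A ⊆ B ∧ B ×ˢ B ⊆ E ∧ ∀ C, B ⊆ C → C ×ˢ C ⊆ E → C = B := by
      have hchainub : ∀ c ⊆ {B | A ⊆ B ∧ B ×ˢ B ⊆ E}, IsChain (· ⊆ ·) c → c.Nonempty →
          ∃ ub ∈ {B | A ⊆ B ∧ B ×ˢ B ⊆ E}, ∀ s ∈ c, s ⊆ ub := by
        intro c hcS hchain hcne
        refine ⟨⋃₀ c, ⟨?_, ?_⟩, fun s hs => subset_sUnion_of_mem hs⟩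
        · obtain ⟨s, hs⟩ := hcne
          exact (hcS hs).1.trans (subset_sUnion_of_mem hs)
        · rintro ⟨x, y⟩ ⟨⟨s, hs, hxs⟩, ⟨t, ht, hyt⟩⟩
          rcases hchain.total hs ht with h | h
          · exact (hcS ht).2 ⟨h hxs, hyt⟩
          · exact (hcS hs).2 ⟨hxs, h hyt⟩
      obtain ⟨Bm, hABm, hmax⟩ :=
        zorn_subset_nonempty {B | A ⊆ B ∧ B ×ˢ B ⊆ E} hchainub A ⟨Subset.rfl, hAE⟩
      exact ⟨Bm, hABm, hmax.prop.2,
        fun C hBC hCE => hmax.eq_of_ge ⟨hmax.prop.1.trans hBC, hCE⟩ hBC⟩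
    -- Step 4: conclude
    simp only [mem_iUnion, mem_setOf_eq]
    refine ⟨B ×ˢ B, ⟨B, rfl, hBE, hBmax⟩, hmem, ?_⟩
    have h1 : (μ.prod μ) {p : (Fin n → ℝ) × (Fin n → ℝ) | u p.1 ∉ A} = 0 := by
      have heq : {p : (Fin n → ℝ) × (Fin n → ℝ) | u p.1 ∉ A} = {x | u x ∉ A} ×ˢ univ := by
        ext ⟨x, y⟩; simp
      rw [heq, Measure.prod_prod, ae_iff.1 hA_ae, zero_mul]
    have h2 : (μ.prod μ) {p : (Fin n → ℝ) × (Fin n → ℝ) | u p.2 ∉ A} = 0 := by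
      have heq : {p : (Fin n → ℝ) × (Fin n → ℝ) | u p.2 ∉ A} = univ ×ˢ {x | u x ∉ A} := by
        ext ⟨x, y⟩; simp
      rw [heq, Measure.prod_prod, ae_iff.1 hA_ae, mul_zero]
    have hh1 : ∀ᵐ p ∂(μ.prod μ), u (p : (Fin n → ℝ) × (Fin n → ℝ)).1 ∈ A := by
      rw [ae_iff]; exact h1
    have hh2 : ∀ᵐ p ∂(μ.prod μ), u (p : (Fin n → ℝ) × (Fin n → ℝ)).2 ∈ A := by
      rw [ae_iff]; exact h2
    filter_upwards [hh1, hh2] with p hp1 hp2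
    exact ⟨hAB hp1, hAB hp2⟩
  · intro u hu
    simp only [mem_iUnion, mem_setOf_eq] at hu
    obtain ⟨P, ⟨A, hPA, hPE, -⟩, hmemP, haeP⟩ := hu
    exact ⟨hmemP, haeP.mono fun p hp => hPE hp⟩
end

section
/- Let K ⊆ ℝ × ℝ be nonempty, compact, symmetric, and diagonal. Then the separately convex hull K^sc equals the set of barycenters [Λ] of product probability measures Λ = ν ⊗ μ (ν, μ Borel probability measures on ℝ) with support contained in K: K^sc = {([ν],[μ]) : ν, μ ∈ Pr(ℝ), supp(ν ⊗ μ) ⊆ K}. -/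
open Set

open MeasureTheory

/-! ### Auxiliary lemmas -/

lemma exists_combo' {c d x : ℝ} (h : x ∈ Icc c d) : ∃ t ∈ Icc (0:ℝ) 1, t*c + (1-t)*d = x := by
  rcases eq_or_lt_of_le (h.1.trans h.2) with hcd | hcd
  · exact ⟨1, ⟨zero_le_one, le_rfl⟩, by nlinarith [h.1, h.2]⟩
  · refine ⟨(d - x)/(d - c), ⟨div_nonneg (by linarith [h.2]) (by linarith), ?_⟩, ?_⟩
    · rw [div_le_one (by linarith)]; linarith [h.1]
    · have hne : d - c ≠ 0 := by linarith
      field_simp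
      ring

lemma comb_mem_union' {a₁ b₁ a₂ b₂ x u v t : ℝ}
    (hx1 : x ∈ Icc a₁ b₁) (hx2 : x ∈ Icc a₂ b₂) (hu : u ∈ Icc a₁ b₁) (hv : v ∈ Icc a₂ b₂)
    (ht : t ∈ Icc (0:ℝ) 1) :
    t*u + (1-t)*v ∈ Icc a₁ b₁ ∨ t*u + (1-t)*v ∈ Icc a₂ b₂ := by
  set z := t*u + (1-t)*v with hz
  have hmin : min u v ≤ z := Convex.min_le_combo u v ht.1 (by linarith [ht.2]) (by ring)
  have hmax : z ≤ max u v := Convex.combo_le_max u v ht.1 (by linarith [ht.2]) (by ring)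
  rcases le_or_gt z b₁ with hb1 | hb1
  · rcases le_or_gt a₁ z with ha1 | ha1
    · exact Or.inl ⟨ha1, hb1⟩
    · refine Or.inr ⟨?_, ?_⟩
      · by_contra hc; push_neg at hc
        rcases le_total u v with h | h
        · simp [min_eq_left h] at hmin; linarith [hu.1]
        · simp [min_eq_right h] at hmin; linarith [hv.1]
      · linarith [hx1.1, hx2.2]
  · refine Or.inr ⟨?_, ?_⟩
    · linarith [hx1.2, hx2.1]
    · by_contra hc; push_neg at hc
      rcases le_total u v with h | h
      · simp [max_eq_right h] at hmax; linarith [hv.2]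
      · simp [max_eq_left h] at hmax; linarith [hu.2]

/-- A convex combination of two Dirac measures. -/
noncomputable def twoPt (a b t : ℝ) : Measure ℝ :=
  (ENNReal.ofReal t) • Measure.dirac a + (ENNReal.ofReal (1-t)) • Measure.dirac b

lemma twoPt_prob {t : ℝ} (a b : ℝ) (ht : t ∈ Icc (0:ℝ) 1) :
    IsProbabilityMeasure (twoPt a b t) := by
  constructor
  simp only [twoPt, Measure.add_apply, Measure.smul_apply, smul_eq_mul,
    MeasureTheory.measure_univ, mul_one]
  rw [← ENNReal.ofReal_add ht.1 (by linarith [ht.2])]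
  norm_num

lemma twoPt_compl {t : ℝ} (a b : ℝ) {S : Set ℝ} (ha : a ∈ S) (hb : b ∈ S) :
    twoPt a b t Sᶜ = 0 := by
  simp [twoPt, Measure.add_apply, Measure.smul_apply, Measure.dirac_apply, indicator, ha, hb]

lemma integrable_id_dirac' (c : ℝ) : Integrable (fun x : ℝ => x) (Measure.dirac c) :=
  (integrable_const c).congr (ae_eq_dirac (fun x : ℝ => x)).symm

lemma integral_twoPt {t : ℝ} (a b : ℝ) (ht : t ∈ Icc (0:ℝ) 1) :
    ∫ x, x ∂(twoPt a b t) = t*a + (1-t)*b := by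
  have h1 : Integrable (fun x : ℝ => x) ((ENNReal.ofReal t) • Measure.dirac a) :=
    (integrable_id_dirac' a).smul_measure ENNReal.ofReal_ne_top
  have h2 : Integrable (fun x : ℝ => x) ((ENNReal.ofReal (1-t)) • Measure.dirac b) :=
    (integrable_id_dirac' b).smul_measure ENNReal.ofReal_ne_top
  rw [twoPt, integral_add_measure h1 h2, integral_smul_measure, integral_smul_measure,
    integral_dirac, integral_dirac, ENNReal.toReal_ofReal ht.1,
    ENNReal.toReal_ofReal (by linarith [ht.2] : (0:ℝ) ≤ 1 - t)]
  simp [smul_eq_mul]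

/-- Every probability measure on `ℝ` has a closed nonempty "support" carrying full mass. -/
lemma exists_good_support' (ν : Measure ℝ) [IsProbabilityMeasure ν] :
    ∃ S : Set ℝ, IsClosed S ∧ S.Nonempty ∧ ν Sᶜ = 0 ∧
      ∀ x ∈ S, ∀ U : Set ℝ, IsOpen U → x ∈ U → ν U ≠ 0 := by
  set 𝒰 : Set (Set ℝ) := {U | IsOpen U ∧ ν U = 0} with h𝒰
  have hnull : ν (⋃₀ 𝒰) = 0 := by
    obtain ⟨T, hTc, hTsub, hTeq⟩ := TopologicalSpace.isOpen_sUnion_countable 𝒰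
      (fun U hU => hU.1)
    rw [← hTeq]
    exact (measure_sUnion_null_iff hTc).2 fun U hU => (hTsub hU).2
  refine ⟨(⋃₀ 𝒰)ᶜ, (isOpen_sUnion fun U hU => hU.1).isClosed_compl, ?_,
    by rwa [compl_compl], ?_⟩
  · by_contra hS
    rw [not_nonempty_iff_eq_empty] at hS
    have : (⋃₀ 𝒰) = univ := by
      rw [← compl_empty_iff, ← hS]
    rw [this] at hnull
    simpa [hnull] using (measure_univ (μ := ν))
  · intro x hx U hUo hxU hν0
    exact hx ⟨U, ⟨hUo, hν0⟩, hxU⟩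

/-- The union of products of intervals over two-point squares inside `K`. -/
def squareHull (K : Set (ℝ × ℝ)) : Set (ℝ × ℝ) :=
  {p | ∃ a b : ℝ, a ≤ b ∧ (({a,b} : Set ℝ) ×ˢ ({a,b} : Set ℝ)) ⊆ K ∧
    p.1 ∈ Icc a b ∧ p.2 ∈ Icc a b}

lemma squareHull_sepConvex (K : Set (ℝ × ℝ)) : SepConvex (squareHull K) := by
  intro p hp q hq t ht hor
  obtain ⟨a₁, b₁, hab₁, hsq₁, hp1, hp2⟩ := hp
  obtain ⟨a₂, b₂, hab₂, hsq₂, hq1, hq2⟩ := hq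
  have he1 : (t • p + (1-t) • q).1 = t * p.1 + (1-t) * q.1 := by simp
  have he2 : (t • p + (1-t) • q).2 = t * p.2 + (1-t) * q.2 := by simp
  rcases hor with h | h
  · have hx2 : p.1 ∈ Icc a₂ b₂ := by rw [h]; exact hq1
    have he1' : (t • p + (1-t) • q).1 = p.1 := by rw [he1, ← h]; ring
    rcases comb_mem_union' hp1 hx2 hp2 hq2 ht with hz | hz
    · exact ⟨a₁, b₁, hab₁, hsq₁, by rw [he1']; exact hp1, by rw [he2]; exact hz⟩
    · exact ⟨a₂, b₂, hab₂, hsq₂, by rw [he1']; exact hx2, by rw [he2]; exact hz⟩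
  · have hy1 : p.2 ∈ Icc a₂ b₂ := by rw [h]; exact hq2
    have he2' : (t • p + (1-t) • q).2 = p.2 := by rw [he2, ← h]; ring
    rcases comb_mem_union' hp2 hy1 hp1 hq1 ht with hz | hz
    · exact ⟨a₁, b₁, hab₁, hsq₁, by rw [he1]; exact hz, by rw [he2']; exact hp2⟩
    · exact ⟨a₂, b₂, hab₂, hsq₂, by rw [he1]; exact hz, by rw [he2']; exact hy1⟩

theorem sepConvexHull_eq_barycenters (K : Set (ℝ × ℝ)) (hne : K.Nonempty)
    (hcpt : IsCompact K)
    (hsym : ∀ p ∈ K, (p.2, p.1) ∈ K)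
    (hdiag : ∀ p ∈ K, (p.1, p.1) ∈ K ∧ (p.2, p.2) ∈ K) :
    sepConvexHull K =
      {p : ℝ × ℝ | ∃ ν μ : Measure ℝ, IsProbabilityMeasure ν ∧ IsProbabilityMeasure μ ∧
        (ν.prod μ) Kᶜ = 0 ∧ p = (∫ x, x ∂ν, ∫ x, x ∂μ)} := by
  have hsquare : ∀ p ∈ K, (({p.1, p.2} : Set ℝ) ×ˢ ({p.1, p.2} : Set ℝ)) ⊆ K := by
    rintro p hp ⟨x, y⟩ hxy
    simp only [mem_prod, mem_insert_iff, mem_singleton_iff] at hxy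
    obtain ⟨hx, hy⟩ := hxy
    rcases hx with rfl | rfl <;> rcases hy with rfl | rfl
    · exact (hdiag p hp).1
    · simpa using hp
    · exact hsym p hp
    · exact (hdiag p hp).2
  apply Set.Subset.antisymm
  · -- hull ⊆ barycenters
    have hKR : K ⊆ squareHull K := by
      intro p hp
      rcases le_total p.1 p.2 with h | h
      · exact ⟨p.1, p.2, h, hsquare p hp, ⟨le_rfl, h⟩, ⟨h, le_rfl⟩⟩
      · refine ⟨p.2, p.1, h, ?_, ⟨h, le_rfl⟩, ⟨le_rfl, h⟩⟩
        rw [Set.pair_comm p.2 p.1]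
        exact hsquare p hp
    have h1 : sepConvexHull K ⊆ squareHull K :=
      sInter_subset_of_mem ⟨hKR, squareHull_sepConvex K⟩
    refine h1.trans ?_
    rintro ⟨x, y⟩ ⟨a, b, hab, hsq, hx, hy⟩
    obtain ⟨t, ht, hteq⟩ := exists_combo' hx
    obtain ⟨s, hs, hseq⟩ := exists_combo' hy
    haveI := twoPt_prob a b ht
    haveI := twoPt_prob a b hs
    refine ⟨twoPt a b t, twoPt a b s, twoPt_prob a b ht, twoPt_prob a b hs, ?_, ?_⟩
    · have h0 : (twoPt a b t).prod (twoPt a b s) ((({a,b} : Set ℝ) ×ˢ ({a,b} : Set ℝ))ᶜ) = 0 :=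
        Measure.measure_prod_compl_eq_zero
          (twoPt_compl a b (by simp) (by simp)) (twoPt_compl a b (by simp) (by simp))
      exact le_antisymm (le_trans (measure_mono (compl_subset_compl.2 hsq)) h0.le) zero_le
    · rw [integral_twoPt a b ht, integral_twoPt a b hs, hteq, hseq]
  · -- barycenters ⊆ hull
    rintro p ⟨ν, μ, hν, hμ, h0, hpeq⟩
    haveI := hν; haveI := hμ
    rw [sepConvexHull]
    rw [mem_sInter]
    rintro F ⟨hKF, hFsc⟩
    obtain ⟨S, hScl, hSne, hSnull, hSpos⟩ := exists_good_support' ν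
    obtain ⟨T, hTcl, hTne, hTnull, hTpos⟩ := exists_good_support' μ
    have hST : S ×ˢ T ⊆ K := by
      rintro ⟨s, t⟩ ⟨hs, ht⟩
      by_contra hstK
      obtain ⟨U, V, hUo, hVo, hsU, htV, hUV⟩ :=
        isOpen_prod_iff.1 hcpt.isClosed.isOpen_compl s t hstK
      have hz : (ν.prod μ) (U ×ˢ V) = 0 :=
        le_antisymm (h0 ▸ measure_mono hUV) zero_le
      rw [Measure.prod_prod] at hz
      rcases mul_eq_zero.1 hz with h | h
      · exact hSpos s hs U hUo hsU h
      · exact hTpos t ht V hVo htV h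
    obtain ⟨t₀, ht₀⟩ := hTne
    obtain ⟨s₀, hs₀⟩ := hSne
    have hScpt : IsCompact S :=
      IsCompact.of_isClosed_subset (hcpt.image continuous_fst) hScl
        (fun s hs => ⟨(s, t₀), hST ⟨hs, ht₀⟩, rfl⟩)
    have hTcpt : IsCompact T :=
      IsCompact.of_isClosed_subset (hcpt.image continuous_snd) hTcl
        (fun t ht => ⟨(s₀, t), hST ⟨hs₀, ht⟩, rfl⟩)
    have hSneR : S.Nonempty := ⟨s₀, hs₀⟩
    have hTneR : T.Nonempty := ⟨t₀, ht₀⟩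
    have hc : sInf S ∈ S := hScpt.sInf_mem hSneR
    have hd : sSup S ∈ S := hScpt.sSup_mem hSneR
    have he : sInf T ∈ T := hTcpt.sInf_mem hTneR
    have hf : sSup T ∈ T := hTcpt.sSup_mem hTneR
    have haeS : ∀ᵐ x ∂ν, x ∈ S := by
      rw [ae_iff]
      exact hSnull
    have haeT : ∀ᵐ x ∂μ, x ∈ T := by
      rw [ae_iff]
      exact hTnull
    have haeIccS : ∀ᵐ x ∂ν, x ∈ Icc (sInf S) (sSup S) :=
      haeS.mono fun x hx => ⟨csInf_le hScpt.bddBelow hx, le_csSup hScpt.bddAbove hx⟩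
    have haeIccT : ∀ᵐ x ∂μ, x ∈ Icc (sInf T) (sSup T) :=
      haeT.mono fun x hx => ⟨csInf_le hTcpt.bddBelow hx, le_csSup hTcpt.bddAbove hx⟩
    have hintS : Integrable (fun x : ℝ => x) ν := by
      refine Integrable.mono' (integrable_const (max |sInf S| |sSup S|))
        measurable_id.aestronglyMeasurable ?_
      exact haeIccS.mono fun x hx => abs_le_max_abs_abs hx.1 hx.2
    have hintT : Integrable (fun x : ℝ => x) μ := by
      refine Integrable.mono' (integrable_const (max |sInf T| |sSup T|))
        measurable_id.aestronglyMeasurable ?_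
      exact haeIccT.mono fun x hx => abs_le_max_abs_abs hx.1 hx.2
    have hνmem : ∫ x, x ∂ν ∈ Icc (sInf S) (sSup S) := by
      constructor
      · have := integral_mono_ae (integrable_const (sInf S)) hintS
          (haeIccS.mono fun x hx => hx.1)
        simpa using this
      · have := integral_mono_ae hintS (integrable_const (sSup S))
          (haeIccS.mono fun x hx => hx.2)
        simpa using this
    have hμmem : ∫ x, x ∂μ ∈ Icc (sInf T) (sSup T) := by
      constructor
      · have := integral_mono_ae (integrable_const (sInf T)) hintT
          (haeIccT.mono fun x hx => hx.1)
        simpa using this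
      · have := integral_mono_ae hintT (integrable_const (sSup T))
          (haeIccT.mono fun x hx => hx.2)
        simpa using this
    have seg : ∀ y u v : ℝ, ((u, y) : ℝ × ℝ) ∈ F → ((v, y) : ℝ × ℝ) ∈ F →
        ∀ x ∈ Icc u v, ((x, y) : ℝ × ℝ) ∈ F := by
      intro y u v huF hvF x hx
      obtain ⟨t, ht, hteq⟩ := exists_combo' hx
      have hmem := hFsc (u, y) huF (v, y) hvF t ht (Or.inr rfl)
      have heq : t • ((u, y) : ℝ × ℝ) + (1-t) • ((v, y) : ℝ × ℝ) = (x, y) := by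
        have h2 : t * y + (1-t) * y = y := by ring
        simp only [Prod.smul_mk, smul_eq_mul, Prod.mk_add_mk, hteq, h2]
      rwa [heq] at hmem
    have segV : ∀ x u v : ℝ, ((x, u) : ℝ × ℝ) ∈ F → ((x, v) : ℝ × ℝ) ∈ F →
        ∀ y ∈ Icc u v, ((x, y) : ℝ × ℝ) ∈ F := by
      intro x u v huF hvF y hy
      obtain ⟨t, ht, hteq⟩ := exists_combo' hy
      have hmem := hFsc (x, u) huF (x, v) hvF t ht (Or.inl rfl)
      have heq : t • ((x, u) : ℝ × ℝ) + (1-t) • ((x, v) : ℝ × ℝ) = (x, y) := by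
        have h2 : t * x + (1-t) * x = x := by ring
        simp only [Prod.smul_mk, smul_eq_mul, Prod.mk_add_mk, hteq, h2]
      rwa [heq] at hmem
    have step1 : ∀ x ∈ Icc (sInf S) (sSup S), ∀ t ∈ T, ((x, t) : ℝ × ℝ) ∈ F :=
      fun x hx t ht => seg t _ _ (hKF (hST ⟨hc, ht⟩)) (hKF (hST ⟨hd, ht⟩)) x hx
    rw [hpeq]
    exact segV _ _ _ (step1 _ hνmem _ he) (step1 _ hνmem _ hf) _ hμmem
end

section
/- Let W : ℝ^m × ℝ^m → ℝ be lower semicontinuous and coercive (W(ξ,ζ) → ∞ as |(ξ,ζ)| → ∞), and define Ŵ(ξ,ζ) = inf{c ∈ ℝ : (ξ,ζ) ∈ widehat(L_c(W))}, where L_c(W) = {W ≤ c} and F̂ = {(α,β) ∈ F : (α,α),(β,α),(β,β) ∈ F}. Then for every c ∈ ℝ, L_c(Ŵ) = widehat(L_c(W)); in particular Ŵ is lower semicontinuous, coercive, symmetric (Ŵ(ξ,ζ) = Ŵ(ζ,ξ)), and Ŵ ≥ W. -/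
/-! The infimum defining `Ŵ(ξ, ζ)` is attained: it is the maximum of `W` over the four points
`(ξ, ζ), (ξ, ξ), (ζ, ξ), (ζ, ζ)`. Its sublevel sets are then the hats of those of `W`, and
lower semicontinuity, coercivity, symmetry and `W ≤ Ŵ` are inherited from this formula. -/

open Set

open Filter

/-- The diagonalized and symmetrized supremand Ŵ. -/
noncomputable def What {m : ℕ} (W : (Fin m → ℝ) × (Fin m → ℝ) → ℝ)
    (p : (Fin m → ℝ) × (Fin m → ℝ)) : ℝ :=
  sInf {c : ℝ | p ∈ hatSet {q | W q ≤ c}}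

section HatMax

variable {α β : Type*} [LinearOrder β]

def hatMax (W : α × α → β) (p : α × α) : β :=
  W p ⊔ W (p.1, p.1) ⊔ (W (p.2, p.1) ⊔ W (p.2, p.2))

theorem mem_hatSet_setOf_le_iff (W : α × α → β) (c : β) (p : α × α) :
    p ∈ hatSet {q | W q ≤ c} ↔ hatMax W p ≤ c := by
  simp only [hatSet, hatMax, Set.mem_ofPred_eq, sup_le_iff]
  tauto

theorem le_hatMax (W : α × α → β) (p : α × α) : W p ≤ hatMax W p :=
  le_sup_of_le_left le_sup_left

theorem hatMax_swap (W : α × α → β) (a b : α) : hatMax W (a, b) = hatMax W (b, a) :=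
  sup_comm _ _

theorem LowerSemicontinuous.hatMax [TopologicalSpace α] [TopologicalSpace β] [OrderTopology β]
    {W : α × α → β} (hW : LowerSemicontinuous W) : LowerSemicontinuous (hatMax W) :=
  (hW.sup (hW.comp (by fun_prop))).sup
    ((hW.comp (by fun_prop)).sup (hW.comp (by fun_prop)))

end HatMax

theorem What_eq_hatMax {m : ℕ} (W : (Fin m → ℝ) × (Fin m → ℝ) → ℝ) : What W = hatMax W := by
  funext p
  have hlevels : {c : ℝ | p ∈ hatSet {q | W q ≤ c}} = Set.Ici (hatMax W p) := by
    ext c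
    exact mem_hatSet_setOf_le_iff W c p
  rw [What, hlevels, csInf_Ici]

theorem What_levelSets {m : ℕ} (W : (Fin m → ℝ) × (Fin m → ℝ) → ℝ)
    (hlsc : LowerSemicontinuous W)
    (hcoer : Tendsto W (cocompact _) atTop) :
    (∀ c : ℝ, {p | What W p ≤ c} = hatSet {q | W q ≤ c}) ∧
    LowerSemicontinuous (What W) ∧
    Tendsto (What W) (cocompact _) atTop ∧
    (∀ ξ ζ : Fin m → ℝ, What W (ξ, ζ) = What W (ζ, ξ)) ∧
    (∀ p, W p ≤ What W p) := by
  rw [What_eq_hatMax]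
  refine ⟨fun c => ?_, hlsc.hatMax, tendsto_atTop_mono (le_hatMax W) hcoer, hatMax_swap W,
    le_hatMax W⟩
  ext p
  exact (mem_hatSet_setOf_le_iff W c p).symm
end

section
/- Let Ŵ : ℝ × ℝ → ℝ be lower semicontinuous and coercive with all sublevel sets symmetric and diagonal. Then for every c ∈ ℝ, the sublevel set of the separately level convex envelope satisfies L_c(Ŵ^slc) = (L_c(Ŵ))^sc, where Ŵ^slc is the largest separately level convex function below Ŵ and (·)^sc denotes the separately convex hull. -/
open Set

open Filter

/-- A real-valued function is separately level convex if all its sublevel sets are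
separately convex. -/
def SepLevelConvex (V : ℝ × ℝ → ℝ) : Prop :=
  ∀ c : ℝ, SepConvex {p | V p ≤ c}

/-!
For a symmetric diagonal set `E ⊆ ℝ²`, the separately convex hull is the union of the squares
`[a, b]²` over `(a, b) ∈ E`: the four corners of such a square lie in `E`, and two squares whose
sides meet a common vertical (or horizontal) line together contain every segment along that line
joining them. Hence `V p := min {W q | p ∈ [q.1, q.2]²}` (attained, since `W` is lower
semicontinuous and coercive) has `(L_c(W))^sc` as its level sets; it is therefore separately
level convex and below `W`, and comparing `Ŵ^slc` with `V` gives the theorem.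
-/

section SepConvex

variable {α : Type*} [AddCommGroup α] [Module ℝ α] {E F : Set (α × α)}

lemma subset_sepConvexHull_s19 : E ⊆ sepConvexHull E :=
  fun _ hp => mem_sInter.2 fun _ hF => hF.1 hp

lemma sepConvexHull_minimal (hEF : E ⊆ F) (hF : SepConvex F) : sepConvexHull E ⊆ F :=
  sInter_subset_of_mem ⟨hEF, hF⟩

lemma sepConvex_sepConvexHull_s19 : SepConvex (sepConvexHull E) :=
  fun _ hp _ hq t ht hpq => mem_sInter.2 fun F hF =>
    hF.2 _ (mem_sInter.1 hp F hF) _ (mem_sInter.1 hq F hF) t ht hpq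

lemma sepConvex_iff_forall_segment : SepConvex F ↔
    (∀ x y y', (x, y) ∈ F → (x, y') ∈ F → ∀ z ∈ segment ℝ y y', (x, z) ∈ F) ∧
      ∀ x x' y, (x, y) ∈ F → (x', y) ∈ F → ∀ z ∈ segment ℝ x x', (z, y) ∈ F := by
  constructor
  · intro hF
    constructor
    · rintro x y y' h h' _ ⟨s, t, hs, ht, hst, rfl⟩
      obtain rfl : t = 1 - s := by linarith
      convert hF _ h _ h' s ⟨hs, by linarith⟩ (Or.inl rfl) using 1
      simp [← add_smul]
    · rintro x x' y h h' _ ⟨s, t, hs, ht, hst, rfl⟩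
      obtain rfl : t = 1 - s := by linarith
      convert hF _ h _ h' s ⟨hs, by linarith⟩ (Or.inr rfl) using 1
      simp [← add_smul]
  · rintro ⟨hsnd, hfst⟩ p hp q hq t ⟨ht₀, ht₁⟩ (h | h)
    · convert hsnd p.1 p.2 q.2 hp (h ▸ hq) _ ⟨t, 1 - t, ht₀, by linarith, by ring, rfl⟩ using 1
      simp [Prod.ext_iff, h, ← add_smul]
    · convert hfst p.1 q.1 p.2 hp (h ▸ hq) _ ⟨t, 1 - t, ht₀, by linarith, by ring, rfl⟩ using 1
      simp [Prod.ext_iff, h, ← add_smul]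

end SepConvex

lemma SepConvex.uIcc_prod_uIcc_subset {F : Set (ℝ × ℝ)} (hF : SepConvex F) {a b : ℝ}
    (haa : (a, a) ∈ F) (hab : (a, b) ∈ F) (hba : (b, a) ∈ F) (hbb : (b, b) ∈ F) :
    uIcc a b ×ˢ uIcc a b ⊆ F := by
  obtain ⟨hsnd, hfst⟩ := sepConvex_iff_forall_segment.1 hF
  rintro ⟨x, y⟩ ⟨hx, hy⟩
  rw [← segment_eq_uIcc] at hx hy
  exact hfst a b y (hsnd a a b haa hab y hy) (hsnd b a b hba hbb y hy) x hx

lemma uIcc_subset_uIcc_union_uIcc_of_mem {β : Type*} [LinearOrder β] {a b a' b' x y y' : β}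
    (hx : x ∈ uIcc a b) (hx' : x ∈ uIcc a' b') (hy : y ∈ uIcc a b) (hy' : y' ∈ uIcc a' b') :
    uIcc y y' ⊆ uIcc a b ∪ uIcc a' b' :=
  uIcc_subset_uIcc_union_uIcc.trans <|
    union_subset_union (uIcc_subset_uIcc hy hx) (uIcc_subset_uIcc hx' hy')

def squareUnion (E : Set (ℝ × ℝ)) : Set (ℝ × ℝ) :=
  ⋃ q ∈ E, uIcc q.1 q.2 ×ˢ uIcc q.1 q.2

section SquareUnion

variable {E : Set (ℝ × ℝ)}

lemma mem_squareUnion {p : ℝ × ℝ} :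
    p ∈ squareUnion E ↔ ∃ q ∈ E, p.1 ∈ uIcc q.1 q.2 ∧ p.2 ∈ uIcc q.1 q.2 := by
  simp only [squareUnion, mem_iUnion₂, mem_prod, exists_prop]

lemma subset_squareUnion : E ⊆ squareUnion E :=
  fun q hq => mem_squareUnion.2 ⟨q, hq, left_mem_uIcc, right_mem_uIcc⟩

lemma sepConvex_squareUnion : SepConvex (squareUnion E) := by
  refine sepConvex_iff_forall_segment.2 ⟨?_, ?_⟩
  · intro x y y' h h' z hz
    obtain ⟨q, hq, hx, hy⟩ := mem_squareUnion.1 h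
    obtain ⟨q', hq', hx', hy'⟩ := mem_squareUnion.1 h'
    rw [segment_eq_uIcc] at hz
    rcases uIcc_subset_uIcc_union_uIcc_of_mem hx hx' hy hy' hz with hz | hz
    exacts [mem_squareUnion.2 ⟨q, hq, hx, hz⟩, mem_squareUnion.2 ⟨q', hq', hx', hz⟩]
  · intro x x' y h h' z hz
    obtain ⟨q, hq, hx, hy⟩ := mem_squareUnion.1 h
    obtain ⟨q', hq', hx', hy'⟩ := mem_squareUnion.1 h'
    rw [segment_eq_uIcc] at hz
    rcases uIcc_subset_uIcc_union_uIcc_of_mem hy hy' hx hx' hz with hz | hz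
    exacts [mem_squareUnion.2 ⟨q, hq, hz, hy⟩, mem_squareUnion.2 ⟨q', hq', hz, hy'⟩]

lemma sepConvexHull_eq_squareUnion (hsym : ∀ p ∈ E, (p.2, p.1) ∈ E)
    (hdiag : ∀ p ∈ E, (p.1, p.1) ∈ E ∧ (p.2, p.2) ∈ E) :
    sepConvexHull E = squareUnion E := by
  refine (sepConvexHull_minimal subset_squareUnion sepConvex_squareUnion).antisymm ?_
  refine iUnion₂_subset fun q hq => sepConvex_sepConvexHull_s19.uIcc_prod_uIcc_subset ?_ ?_ ?_ ?_
  · exact subset_sepConvexHull_s19 (hdiag q hq).1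
  · exact subset_sepConvexHull_s19 hq
  · exact subset_sepConvexHull_s19 (hsym q hq)
  · exact subset_sepConvexHull_s19 (hdiag q hq).2

end SquareUnion

lemma isClosed_setOf_mem_uIcc_prod_uIcc {β : Type*} [LinearOrder β] [TopologicalSpace β]
    [OrderClosedTopology β] (p : β × β) :
    IsClosed {q : β × β | p ∈ uIcc q.1 q.2 ×ˢ uIcc q.1 q.2} := by
  simp only [uIcc, mem_prod, mem_Icc, ofPred_and]
  refine .inter (.inter ?_ ?_) (.inter ?_ ?_) <;> exact isClosed_le (by fun_prop) (by fun_prop)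

section Coercive

variable {X β : Type*} [TopologicalSpace X] [LinearOrder β] [NoMaxOrder β] {f : X → β}

lemma LowerSemicontinuous.isCompact_sublevel_of_tendsto_cocompact (hf : LowerSemicontinuous f)
    (hcoer : Tendsto f (cocompact X) atTop) (c : β) : IsCompact {x | f x ≤ c} := by
  obtain ⟨K, hK, hsub⟩ := mem_cocompact'.1 (hcoer.eventually (eventually_gt_atTop c))
  refine hK.of_isClosed_subset (hf.isClosed_preimage c) fun x hx => hsub ?_
  simpa using hx

lemma LowerSemicontinuous.exists_isMinOn_of_tendsto_cocompact (hf : LowerSemicontinuous f)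
    (hcoer : Tendsto f (cocompact X) atTop) {K : Set X} (hK : IsClosed K) (hne : K.Nonempty) :
    ∃ a ∈ K, IsMinOn f K a := by
  obtain ⟨x₀, hx₀⟩ := hne
  obtain ⟨a, ⟨haK, -⟩, ha⟩ :=
    LowerSemicontinuousOn.exists_isMinOn (s := K ∩ {x | f x ≤ f x₀}) ⟨x₀, hx₀, le_rfl⟩
    ((hf.isCompact_sublevel_of_tendsto_cocompact hcoer (f x₀)).inter_left hK)
    (hf.lowerSemicontinuousOn _)
  refine ⟨a, haK, fun x hx => ?_⟩
  rcases le_or_gt (f x) (f x₀) with hle | hlt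
  · exact ha ⟨hx, hle⟩
  · exact (ha ⟨hx₀, le_rfl⟩).trans hlt.le

end Coercive

lemma exists_sublevel_eq_squareUnion {W : ℝ × ℝ → ℝ} (hlsc : LowerSemicontinuous W)
    (hcoer : Tendsto W (cocompact _) atTop) :
    ∃ V : ℝ × ℝ → ℝ, ∀ c, {p | V p ≤ c} = squareUnion {p | W p ≤ c} := by
  have hmin (p : ℝ × ℝ) :=
    hlsc.exists_isMinOn_of_tendsto_cocompact hcoer (isClosed_setOf_mem_uIcc_prod_uIcc p)
      ⟨p, left_mem_uIcc, right_mem_uIcc⟩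
  choose q hpq hq using hmin
  refine ⟨W ∘ q, fun c => Set.ext fun p => ⟨fun hp => mem_squareUnion.2 ⟨q p, hp, hpq p⟩, ?_⟩⟩
  intro hp
  obtain ⟨r, hr, hpr⟩ := mem_squareUnion.1 hp
  exact (hq p hpr).trans (show W r ≤ c from hr)

theorem slc_envelope_levelSets (W : ℝ × ℝ → ℝ)
    (hlsc : LowerSemicontinuous W)
    (hcoer : Tendsto W (cocompact _) atTop)
    (hsym : ∀ c : ℝ, ∀ p ∈ {p : ℝ × ℝ | W p ≤ c}, (p.2, p.1) ∈ {p : ℝ × ℝ | W p ≤ c})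
    (hdiag : ∀ c : ℝ, ∀ p ∈ {p : ℝ × ℝ | W p ≤ c},
      (p.1, p.1) ∈ {p : ℝ × ℝ | W p ≤ c} ∧ (p.2, p.2) ∈ {p : ℝ × ℝ | W p ≤ c})
    (Wslc : ℝ × ℝ → ℝ)
    (h₁ : SepLevelConvex Wslc) (h₂ : ∀ p, Wslc p ≤ W p)
    (h₃ : ∀ V : ℝ × ℝ → ℝ, SepLevelConvex V → (∀ p, V p ≤ W p) → ∀ p, V p ≤ Wslc p) :
    ∀ c : ℝ, {p | Wslc p ≤ c} = sepConvexHull {p : ℝ × ℝ | W p ≤ c} := by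
  obtain ⟨V, hV⟩ := exists_sublevel_eq_squareUnion hlsc hcoer
  have hV_hull (c : ℝ) : {p | V p ≤ c} = sepConvexHull {p | W p ≤ c} :=
    (hV c).trans (sepConvexHull_eq_squareUnion (hsym c) (hdiag c)).symm
  have hV_slc : SepLevelConvex V := fun c => hV_hull c ▸ sepConvex_sepConvexHull_s19
  have hV_le (p : ℝ × ℝ) : V p ≤ W p :=
    (hV_hull (W p)).superset (subset_sepConvexHull_s19 (show W p ≤ W p from le_rfl))
  intro c
  refine Subset.antisymm (fun p hp => ?_)
    (sepConvexHull_minimal (fun p hp => (h₂ p).trans hp) (h₁ c))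
  rw [← hV_hull]
  exact (h₃ V hV_slc hV_le p).trans hp
end
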